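/- arXiv:1409.1291 — 7 statements merged into one kernel-verified Lean document; each statement's English description precedes it below -/
import Mathlib

section
/- Any C² solution u of u''(x) = λ/(1+u(x))² on (-1,1) with u(±1) = 0, u > -1, and λ > 0 is an even function: u(-x) = u(x) for all x ∈ (-1,1). -/
/-!
By Rolle's theorem `u'` vanishes at some `x₀ ∈ (-1, 1)`. The equation is autonomous, so
`t ↦ (u (x₀ - t), -u' (x₀ - t))` solves the same first-order system as
`t ↦ (u (x₀ + t), u' (x₀ + t))`, with the same value at `t = 0`. The right-hand side is Lipschitz
on the compact range of `u`, which stays away from `-1`, so uniqueness gives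
`u (x₀ + t) = u (x₀ - t)` for `|t| ≤ 1 - |x₀|`. If `x₀ ≠ 0`, one of `x₀ ± (1 - |x₀|)` is `±1` and
the other lies inside `(-1, 1)`, where `u'' > 0` forces `u < 0`, so `u` cannot vanish there.
-/

open Set NNReal

theorem ODE_second_order_reflect {F u u' : ℝ → ℝ} {K : ℝ≥0} {s : Set ℝ}
    (hF : LipschitzOnWith K F s) {x₀ r : ℝ} (hr : 0 < r)
    (hcont : ContinuousOn u (Icc (x₀ - r) (x₀ + r)))
    (hu : ∀ x ∈ Ioo (x₀ - r) (x₀ + r),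
      HasDerivAt u (u' x) x ∧ HasDerivAt u' (F (u x)) x ∧ u x ∈ s)
    (hcrit : u' x₀ = 0) :
    EqOn (fun t ↦ u (x₀ + t)) (fun t ↦ u (x₀ - t)) (Icc (-r) r) := by
  have hv : LipschitzOnWith (max 1 K) (fun p : ℝ × ℝ ↦ (p.2, F p.1)) (Prod.fst ⁻¹' s) := by
    simpa only [mul_one, Function.comp_def] using LipschitzWith.prod_snd.lipschitzOnWith.prodMk
      (hF.comp LipschitzWith.prod_fst.lipschitzOnWith (mapsTo_preimage _ _))
  have hforward : ∀ t ∈ Ioo (-r) r, HasDerivAt (fun t ↦ (u (x₀ + t), u' (x₀ + t)))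
      (u' (x₀ + t), F (u (x₀ + t))) t ∧ u (x₀ + t) ∈ s := fun t ht ↦ by
    obtain ⟨hu₁, hu₂, hus⟩ := hu (x₀ + t) ⟨by linarith [ht.1], by linarith [ht.2]⟩
    exact ⟨(hu₁.comp_const_add x₀ t).prodMk (hu₂.comp_const_add x₀ t), hus⟩
  have hbackward : ∀ t ∈ Ioo (-r) r, HasDerivAt (fun t ↦ (u (x₀ - t), -u' (x₀ - t)))
      (-u' (x₀ - t), F (u (x₀ - t))) t ∧ u (x₀ - t) ∈ s := fun t ht ↦ by
    obtain ⟨hu₁, hu₂, hus⟩ := hu (x₀ - t) ⟨by linarith [ht.2], by linarith [ht.1]⟩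
    refine ⟨(hu₁.comp_const_sub x₀ t).prodMk ?_, hus⟩
    simpa using (hu₂.comp_const_sub x₀ t).fun_neg
  have hIoo : EqOn (fun t ↦ u (x₀ + t)) (fun t ↦ u (x₀ - t)) (Ioo (-r) r) := fun t ht ↦
    congrArg Prod.fst <| ODE_solution_unique_of_mem_Ioo (fun _ _ ↦ hv) ⟨neg_lt_zero.2 hr, hr⟩
      hforward hbackward (by simp [hcrit]) ht
  refine hIoo.of_subset_closure ?_ ?_ Ioo_subset_Icc_self (closure_Ioo (by linarith)).ge
  · exact hcont.comp (by fun_prop) fun t ht ↦ ⟨by linarith [ht.1], by linarith [ht.2]⟩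
  · exact hcont.comp (by fun_prop) fun t ht ↦ ⟨by linarith [ht.2], by linarith [ht.1]⟩

theorem ContDiffOn.hasDerivAt_deriv_of_mem_Ioo {u : ℝ → ℝ} {a b x : ℝ}
    (hu : ContDiffOn ℝ 2 u (Icc a b)) (hx : x ∈ Ioo a b) :
    HasDerivAt u (deriv u x) x ∧ HasDerivAt (deriv u) (deriv (deriv u) x) x := by
  have hu' : ContDiffOn ℝ 2 u (Ioo a b) := hu.mono Ioo_subset_Icc_self
  have hx' := isOpen_Ioo.mem_nhds hx
  have hu'' : ContDiffOn ℝ 1 (deriv u) (Ioo a b) := hu'.deriv_of_isOpen isOpen_Ioo (by norm_num)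
  exact ⟨((hu'.differentiableOn (by norm_num)).differentiableAt hx').hasDerivAt,
    ((hu''.differentiableOn one_ne_zero).differentiableAt hx').hasDerivAt⟩

theorem exists_lipschitzOnWith_div_one_add_sq (lam : ℝ) {s : Set ℝ} (hs : IsCompact s)
    (hs' : s ⊆ Ioi (-1)) : ∃ K, LipschitzOnWith K (fun y ↦ lam / (1 + y) ^ 2) s := by
  refine LocallyLipschitzOn.exists_lipschitzOnWith_of_compact hs (LocallyLipschitzOn.mono ?_ hs')
  refine ContDiffOn.locallyLipschitzOn (convex_Ioi _) ?_
  exact contDiffOn_const.div (by fun_prop) fun y (hy : -1 < y) ↦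
    pow_ne_zero _ (by linarith : 0 < 1 + y).ne'

theorem StrictConvexOn.lt_zero_of_mem_Ioo {u : ℝ → ℝ} {a b x : ℝ}
    (hu : StrictConvexOn ℝ (Icc a b) u) (ha : u a = 0) (hb : u b = 0) (hx : x ∈ Ioo a b) :
    u x < 0 := by
  have hab : a < b := hx.1.trans hx.2
  simpa [ha, hb] using hu.lt_on_openSegment (left_mem_Icc.2 hab.le) (right_mem_Icc.2 hab.le)
    hab.ne (by rwa [openSegment_eq_Ioo hab])

theorem lt_zero_of_deriv_deriv_pos {u : ℝ → ℝ} {a b : ℝ} (hu : ContinuousOn u (Icc a b))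
    (ha : u a = 0) (hb : u b = 0) (hpos : ∀ x ∈ Ioo a b, 0 < deriv (deriv u) x) :
    ∀ x ∈ Ioo a b, u x < 0 := by
  refine fun x hx ↦ StrictConvexOn.lt_zero_of_mem_Ioo ?_ ha hb hx
  refine strictConvexOn_of_deriv2_pos (convex_Icc _ _) hu fun y hy ↦ ?_
  rw [interior_Icc] at hy
  exact hpos y hy

theorem eq_zero_of_reflect_eq {u : ℝ → ℝ} {x₀ : ℝ} (hbc : u (-1) = 0 ∧ u 1 = 0)
    (hneg : ∀ x ∈ Ioo (-1 : ℝ) 1, u x < 0) (hx₀ : x₀ ∈ Ioo (-1 : ℝ) 1)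
    (hsymm : u (x₀ + (1 - |x₀|)) = u (x₀ - (1 - |x₀|))) : x₀ = 0 := by
  by_contra hne
  rcases lt_or_gt_of_ne hne with hlt | hgt
  · rw [abs_of_neg hlt, show x₀ - (1 - -x₀) = -1 by ring, hbc.1] at hsymm
    exact (hneg _ ⟨by linarith [hx₀.1], by linarith⟩).ne hsymm
  · rw [abs_of_pos hgt, show x₀ + (1 - x₀) = 1 by ring, hbc.2] at hsymm
    exact (hneg _ ⟨by linarith, by linarith [hx₀.2]⟩).ne hsymm.symm

/-- Any stationary small-aspect-ratio MEMS solution is even. -/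
theorem stationary_even (lam : ℝ) (hl : 0 < lam) (u : ℝ → ℝ)
    (hu_smooth : ContDiffOn ℝ 2 u (Set.Icc (-1 : ℝ) 1))
    (hbc : u (-1) = 0 ∧ u 1 = 0)
    (hu : ∀ x ∈ Set.Icc (-1 : ℝ) 1, -1 < u x)
    (hode : ∀ x ∈ Set.Ioo (-1 : ℝ) 1, deriv (deriv u) x = lam / (1 + u x) ^ 2) :
    ∀ x ∈ Set.Ioo (-1 : ℝ) 1, u (-x) = u x := by
  have hcont := hu_smooth.continuousOn
  have hneg := lt_zero_of_deriv_deriv_pos hcont hbc.1 hbc.2 fun x hx ↦ by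
    have : 0 < 1 + u x := by linarith [hu x (Ioo_subset_Icc_self hx)]
    rw [hode x hx]
    positivity
  obtain ⟨K, hK⟩ := exists_lipschitzOnWith_div_one_add_sq lam
    (isCompact_Icc.image_of_continuousOn hcont) (image_subset_iff.2 hu)
  obtain ⟨x₀, hx₀, hcrit⟩ :=
    exists_deriv_eq_zero (by norm_num : (-1 : ℝ) < 1) hcont (hbc.1.trans hbc.2.symm)
  set r := 1 - |x₀|
  have hr : 0 < r := sub_pos.2 (abs_lt.2 hx₀)
  have hleft : -1 ≤ x₀ - r := by linarith [neg_abs_le x₀]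
  have hright : x₀ + r ≤ 1 := by linarith [le_abs_self x₀]
  have hsymm := ODE_second_order_reflect hK hr (hcont.mono (Icc_subset_Icc hleft hright))
    (fun x hx ↦ by
      have hx' := Ioo_subset_Ioo hleft hright hx
      obtain ⟨hu₁, hu₂⟩ := hu_smooth.hasDerivAt_deriv_of_mem_Ioo hx'
      exact ⟨hu₁, hode x hx' ▸ hu₂, mem_image_of_mem u (Ioo_subset_Icc_self hx')⟩) hcrit
  obtain rfl := eq_zero_of_reflect_eq hbc hneg hx₀ (hsymm (right_mem_Icc.2 (by linarith)))
  intro x hx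
  simpa using (hsymm (by simpa [r] using Ioo_subset_Icc_self hx)).symm
end

section
/- There exists λ₀ > 0 such that for every λ ∈ (0, λ₀) the boundary value problem u'' = λ/(1+u)² on (-1,1), u(±1) = 0, has at least one C² solution with -1 < u ≤ 0. -/
/-!
With `w = 1 + u`, the equation `w'' = λ / w²` has the first integral `w'² / 2 + λ / w = const`,
and the substitution `w = m cosh² θ` (with `m = w(0)` the minimum) integrates it: `θ` is given
implicitly by `θ + sinh θ cosh θ = √(2λ / m³) x`. Imposing `w(±1) = 1` through the endpoint
parameter `t = θ(1)` gives `m = 1 / cosh² t` and `λ = (t + sinh t cosh t)² / (2 cosh⁶ t)`,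
a continuous function of `t` vanishing at `0` and positive afterwards; the intermediate value
theorem then produces a solution for every `λ` between `0` and its value at `t = 1`.
Since `|θ| ≤ t` on `[-1, 1]`, the solution satisfies `0 < w ≤ 1`.
-/

open Real Set Filter

noncomputable section

namespace MEMS

def phi (θ : ℝ) : ℝ := θ + sinh θ * cosh θ

lemma hasDerivAt_phi (θ : ℝ) : HasDerivAt phi (2 * cosh θ ^ 2) θ := by
  refine ((hasDerivAt_id θ).add ((hasDerivAt_sinh θ).mul (hasDerivAt_cosh θ))).congr_deriv ?_
  nlinarith [cosh_sq θ]

lemma contDiff_phi {n : WithTop ℕ∞} : ContDiff ℝ n phi := by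
  unfold phi; fun_prop

lemma strictMono_phi : StrictMono phi :=
  strictMono_of_deriv_pos fun θ => by
    rw [(hasDerivAt_phi θ).deriv]
    have := cosh_pos θ
    positivity

lemma phi_neg (θ : ℝ) : phi (-θ) = -phi θ := by
  simp only [phi, sinh_neg, cosh_neg]; ring

lemma le_phi {θ : ℝ} (hθ : 0 ≤ θ) : θ ≤ phi θ := by
  have : 0 ≤ sinh θ := sinh_nonneg_iff.mpr hθ
  have := cosh_pos θ
  unfold phi; nlinarith

lemma surjective_phi : Function.Surjective phi := by
  have hTop : Tendsto phi atTop atTop :=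
    tendsto_atTop_mono' atTop (eventually_ge_atTop 0 |>.mono fun _ => le_phi) tendsto_id
  have hBot : Tendsto (fun θ => -phi (-θ)) atBot atBot :=
    tendsto_neg_atTop_atBot.comp (hTop.comp tendsto_neg_atBot_atTop)
  simp only [phi_neg, neg_neg] at hBot
  exact (contDiff_phi (n := 0)).continuous.surjective hTop hBot

def phiOrderIso : ℝ ≃o ℝ := strictMono_phi.orderIsoOfSurjective phi surjective_phi

def psi : ℝ → ℝ := phiOrderIso.symm

lemma phi_psi (y : ℝ) : phi (psi y) = y := phiOrderIso.apply_symm_apply y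

lemma psi_phi (θ : ℝ) : psi (phi θ) = θ := phiOrderIso.symm_apply_apply θ

lemma strictMono_psi : StrictMono psi := phiOrderIso.symm.strictMono

lemma contDiff_psi {n : WithTop ℕ∞} : ContDiff ℝ n psi :=
  phiOrderIso.toHomeomorph.contDiff_symm_deriv (fun θ => by have := cosh_pos θ; positivity)
    hasDerivAt_phi contDiff_phi

lemma hasDerivAt_psi (y : ℝ) : HasDerivAt psi (2 * cosh (psi y) ^ 2)⁻¹ y :=
  (hasDerivAt_phi (psi y)).of_local_left_inverse phiOrderIso.symm.continuous.continuousAt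
    (by have := cosh_pos (psi y); positivity) (Eventually.of_forall phi_psi)

lemma hasDerivAt_psi_comp_mul (B x : ℝ) :
    HasDerivAt (fun x => psi (B * x)) (B / (2 * cosh (psi (B * x)) ^ 2)) x := by
  refine ((hasDerivAt_psi (B * x)).comp x ((hasDerivAt_id x).const_mul B)).congr_deriv ?_
  simp only [mul_one]
  ring

/-- The solution `u = w - 1` with endpoint parameter `t`, i.e. `θ(x) = psi (phi t * x)`. -/
def profile (t x : ℝ) : ℝ := cosh (psi (phi t * x)) ^ 2 / cosh t ^ 2 - 1

def voltage (t : ℝ) : ℝ := phi t ^ 2 / (2 * cosh t ^ 6)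

lemma contDiff_profile {n : WithTop ℕ∞} (t : ℝ) : ContDiff ℝ n (profile t) := by
  have := contDiff_psi (n := n)
  unfold profile; fun_prop

lemma profile_one (t : ℝ) : profile t 1 = 0 := by
  have := cosh_pos t
  rw [profile, mul_one, psi_phi, div_self (by positivity), sub_self]

lemma profile_neg_one (t : ℝ) : profile t (-1) = 0 := by
  rw [← profile_one t, profile, profile, mul_neg_one, ← phi_neg, psi_phi, mul_one, psi_phi,
    cosh_neg]

lemma neg_one_lt_profile (t x : ℝ) : -1 < profile t x := by
  have := cosh_pos (psi (phi t * x))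
  have := cosh_pos t
  rw [profile]
  linarith [show 0 < cosh (psi (phi t * x)) ^ 2 / cosh t ^ 2 by positivity]

lemma profile_nonpos {t x : ℝ} (ht : 0 ≤ t) (hx : x ∈ Icc (-1 : ℝ) 1) : profile t x ≤ 0 := by
  have hphi : 0 ≤ phi t := by simpa [phi] using strictMono_phi.monotone ht
  have hθ : |psi (phi t * x)| ≤ t := by
    rw [abs_le]
    constructor
    · calc -t = psi (phi t * (-1)) := by rw [mul_neg_one, ← phi_neg, psi_phi]
        _ ≤ psi (phi t * x) := strictMono_psi.monotone (by nlinarith [hx.1])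
    · calc psi (phi t * x) ≤ psi (phi t * 1) := strictMono_psi.monotone (by nlinarith [hx.2])
        _ = t := by rw [mul_one, psi_phi]
  have := cosh_pos t
  have hcosh : cosh (psi (phi t * x)) ≤ cosh t := by
    rwa [cosh_le_cosh, abs_of_nonneg ht]
  rw [profile, sub_nonpos, div_le_one (by positivity)]
  gcongr

lemma deriv_profile (t : ℝ) : deriv (profile t) = fun x =>
    phi t / cosh t ^ 2 * (sinh (psi (phi t * x)) / cosh (psi (phi t * x))) := by
  funext x
  refine HasDerivAt.deriv ?_
  have hθ := hasDerivAt_psi_comp_mul (phi t) x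
  refine ((((hasDerivAt_cosh _).comp x hθ).pow 2).div_const (cosh t ^ 2)
    |>.sub_const 1).congr_deriv ?_
  have := cosh_pos (psi (phi t * x))
  simp only [Function.comp_apply]
  field_simp
  ring

lemma hasDerivAt_deriv_profile (t x : ℝ) :
    HasDerivAt (deriv (profile t))
      (phi t ^ 2 / (2 * cosh t ^ 2 * cosh (psi (phi t * x)) ^ 4)) x := by
  have hθ := hasDerivAt_psi_comp_mul (phi t) x
  have hc := cosh_pos (psi (phi t * x))
  rw [deriv_profile]
  refine ((((hasDerivAt_sinh _).comp x hθ).div ((hasDerivAt_cosh _).comp x hθ) hc.ne').const_mul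
    (phi t / cosh t ^ 2)).congr_deriv ?_
  have := cosh_sq_sub_sinh_sq (psi (phi t * x))
  simp only [Function.comp_apply]
  field_simp
  linear_combination (phi t ^ 2) * this

lemma deriv_deriv_profile (t x : ℝ) :
    deriv (deriv (profile t)) x = voltage t / (1 + profile t x) ^ 2 := by
  have := cosh_pos (psi (phi t * x))
  have := cosh_pos t
  rw [(hasDerivAt_deriv_profile t x).deriv, voltage, profile]
  field_simp
  ring

lemma continuous_voltage : Continuous voltage := by
  have := contDiff_phi (n := 0)
  unfold voltage
  fun_prop (disch := exact fun t => by have := cosh_pos t; positivity)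

lemma voltage_zero : voltage 0 = 0 := by simp [voltage, phi]

lemma voltage_pos {t : ℝ} (ht : 0 < t) : 0 < voltage t := by
  have : 0 < phi t := by simpa [phi] using strictMono_phi ht
  have := cosh_pos t
  unfold voltage; positivity

end MEMS

end

open MEMS in
/-- Existence of stationary solutions of the small-aspect-ratio MEMS model for
all sufficiently small voltages. -/
theorem stationary_existence_small_lambda :
    ∃ lam₀ > (0 : ℝ), ∀ lam ∈ Set.Ioo (0 : ℝ) lam₀, ∃ u : ℝ → ℝ,
      ContDiffOn ℝ 2 u (Set.Icc (-1 : ℝ) 1) ∧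
      u (-1) = 0 ∧ u 1 = 0 ∧
      (∀ x ∈ Set.Icc (-1 : ℝ) 1, -1 < u x ∧ u x ≤ 0) ∧
      (∀ x ∈ Set.Ioo (-1 : ℝ) 1, deriv (deriv u) x = lam / (1 + u x) ^ 2) := by
  refine ⟨voltage 1, voltage_pos one_pos, fun lam hlam => ?_⟩
  obtain ⟨t, ht, rfl⟩ := intermediate_value_Ioo zero_le_one continuous_voltage.continuousOn
    (by rwa [voltage_zero])
  exact ⟨profile t, (contDiff_profile t).contDiffOn, profile_neg_one t, profile_one t,
    fun x hx => ⟨neg_one_lt_profile t x, profile_nonpos ht.1.le hx⟩,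
    fun x _ => deriv_deriv_profile t x⟩
end

section
/- The set Λ = {λ > 0 : the problem u'' = λ/(1+u)² on (-1,1), u(±1)=0, -1 < u, has a C² solution} is nonempty and bounded above; define λ* = sup Λ. Then 0 < λ* < ∞. -/
/-!
For `w = 1 + u` the first integral of `w'' = λ / w ^ 2` is `w' ^ 2 = 2 λ (1 / w(0) - 1 / w)`, and
the substitution `w = w(0) cosh ^ 2 s` turns it into `dx ∝ 2 cosh ^ 2 s ds`. Hence, with
`timeMap s = s + sinh s cosh s`, the functions `w = cosh ^ 2 s / cosh ^ 2 θ`, where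
`timeMap s = timeMap θ * x`, solve the problem with `λ = timeMap θ ^ 2 / (2 cosh ^ 6 θ)`.

Conversely, a solution is convex, so `-1 < u ≤ 0`; then `u'' ≥ λ`, so `u` stays below the parabola
`λ (x ^ 2 - 1) / 2`, and at `x = 0` this forces `λ < 2`.
-/

open Real Set Filter

lemma nonpos_of_hasDerivAt2_nonneg {a b x : ℝ} {f f' f'' : ℝ → ℝ}
    (hf : ContinuousOn f (Icc a b))
    (hf' : ∀ y ∈ Ioo a b, HasDerivAt f (f' y) y) (hf'' : ∀ y ∈ Ioo a b, HasDerivAt f' (f'' y) y)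
    (hf''₀ : ∀ y ∈ Ioo a b, 0 ≤ f'' y) (ha : f a ≤ 0) (hb : f b ≤ 0) (hx : x ∈ Icc a b) :
    f x ≤ 0 := by
  have hconv : ConvexOn ℝ (Icc a b) f := by
    refine convexOn_of_hasDerivWithinAt2_nonneg (f' := f') (f'' := f'') (convex_Icc a b) hf ?_ ?_
      ?_ <;> rw [interior_Icc]
    exacts [fun y hy => (hf' y hy).hasDerivWithinAt, fun y hy => (hf'' y hy).hasDerivWithinAt,
      hf''₀]
  have hab : a ≤ b := hx.1.trans hx.2
  exact (hconv.le_max_of_mem_Icc (left_mem_Icc.2 hab) (right_mem_Icc.2 hab) hx).trans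
    (max_le ha hb)

lemma ContDiffOn.hasDerivAt_deriv_deriv {u : ℝ → ℝ} {s : Set ℝ} {x : ℝ}
    (hu : ContDiffOn ℝ 2 u s) (hs : IsOpen s) (hx : x ∈ s) :
    HasDerivAt (deriv u) (deriv (deriv u) x) x :=
  ((hu.deriv_of_isOpen hs (m := 1) (by norm_num)).differentiableOn one_ne_zero
    |>.differentiableAt (hs.mem_nhds hx)).hasDerivAt

noncomputable section

namespace PullIn

def timeMap (t : ℝ) : ℝ := t + sinh t * cosh t

lemma hasDerivAt_timeMap (t : ℝ) : HasDerivAt timeMap (2 * cosh t ^ 2) t := by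
  refine ((hasDerivAt_id t).add ((hasDerivAt_sinh t).mul (hasDerivAt_cosh t))).congr_deriv ?_
  linear_combination sinh_sq t

lemma contDiff_timeMap {n : WithTop ℕ∞} : ContDiff ℝ n timeMap := by
  unfold timeMap; fun_prop

lemma timeMap_neg (t : ℝ) : timeMap (-t) = -timeMap t := by
  simp only [timeMap, sinh_neg, cosh_neg]; ring

lemma strictMono_timeMap : StrictMono timeMap :=
  strictMono_of_deriv_pos fun t => by rw [(hasDerivAt_timeMap t).deriv]; positivity

lemma surjective_timeMap : Function.Surjective timeMap := by
  refine (contDiff_timeMap (n := 0)).continuous.surjective ?_ ?_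
  · refine tendsto_atTop_mono' _ ?_ tendsto_id
    filter_upwards [eventually_ge_atTop 0] with t ht
    have : 0 ≤ sinh t * cosh t := mul_nonneg (sinh_nonneg_iff.2 ht) (cosh_pos t).le
    simp only [timeMap, id]; linarith
  · refine tendsto_atBot_mono' _ ?_ tendsto_id
    filter_upwards [eventually_le_atBot 0] with t ht
    have : sinh t * cosh t ≤ 0 :=
      mul_nonpos_of_nonpos_of_nonneg (sinh_nonpos_iff.2 ht) (cosh_pos t).le
    simp only [timeMap, id]; linarith

def timeMapHomeomorph : ℝ ≃ₜ ℝ :=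
  (StrictMono.orderIsoOfSurjective timeMap strictMono_timeMap surjective_timeMap).toHomeomorph

lemma timeMapHomeomorph_symm_timeMap (t : ℝ) : timeMapHomeomorph.symm (timeMap t) = t :=
  timeMapHomeomorph.symm_apply_apply t

lemma contDiff_timeMapHomeomorph_symm {n : WithTop ℕ∞} : ContDiff ℝ n timeMapHomeomorph.symm :=
  timeMapHomeomorph.contDiff_symm_deriv (fun t => by positivity) hasDerivAt_timeMap contDiff_timeMap

lemma hasDerivAt_timeMapHomeomorph_symm (y : ℝ) :
    HasDerivAt timeMapHomeomorph.symm (2 * cosh (timeMapHomeomorph.symm y) ^ 2)⁻¹ y :=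
  timeMapHomeomorph.toOpenPartialHomeomorph.hasDerivAt_symm (mem_univ y) (by positivity)
    (hasDerivAt_timeMap _)

def IsStationarySolution (lam : ℝ) (u : ℝ → ℝ) : Prop :=
  ContDiffOn ℝ 2 u (Icc (-1 : ℝ) 1) ∧ u (-1) = 0 ∧ u 1 = 0 ∧
    (∀ x ∈ Icc (-1 : ℝ) 1, -1 < u x) ∧
    ∀ x ∈ Ioo (-1 : ℝ) 1, deriv (deriv u) x = lam / (1 + u x) ^ 2

section Family

variable (θ : ℝ)

def stationarySolution (x : ℝ) : ℝ :=
  cosh (timeMapHomeomorph.symm (timeMap θ * x)) ^ 2 / cosh θ ^ 2 - 1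

def stationaryVoltage : ℝ := timeMap θ ^ 2 / (2 * cosh θ ^ 6)

lemma contDiff_stationarySolution {n : WithTop ℕ∞} : ContDiff ℝ n (stationarySolution θ) := by
  have := contDiff_timeMapHomeomorph_symm (n := n)
  unfold stationarySolution; fun_prop

lemma hasDerivAt_timeMapHomeomorph_symm_mul (x : ℝ) :
    HasDerivAt (fun x => timeMapHomeomorph.symm (timeMap θ * x))
      (timeMap θ / (2 * cosh (timeMapHomeomorph.symm (timeMap θ * x)) ^ 2)) x :=
  ((hasDerivAt_timeMapHomeomorph_symm _).comp x ((hasDerivAt_id' x).const_mul _)).congr_deriv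
    (by rw [mul_one, inv_mul_eq_div])

lemma hasDerivAt_stationarySolution (x : ℝ) :
    HasDerivAt (stationarySolution θ)
      (timeMap θ * sinh (timeMapHomeomorph.symm (timeMap θ * x)) /
        (cosh θ ^ 2 * cosh (timeMapHomeomorph.symm (timeMap θ * x)))) x := by
  have hs := hasDerivAt_timeMapHomeomorph_symm_mul θ x
  set s := timeMapHomeomorph.symm (timeMap θ * x)
  refine (((hs.cosh).pow 2).div_const _ |>.sub_const 1).congr_deriv ?_
  have := cosh_pos s
  field_simp
  ring

lemma deriv_stationarySolution :
    deriv (stationarySolution θ) = fun x =>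
      timeMap θ * sinh (timeMapHomeomorph.symm (timeMap θ * x)) /
        (cosh θ ^ 2 * cosh (timeMapHomeomorph.symm (timeMap θ * x))) :=
  funext fun x => (hasDerivAt_stationarySolution θ x).deriv

lemma deriv_deriv_stationarySolution (x : ℝ) :
    deriv (deriv (stationarySolution θ)) x =
      timeMap θ ^ 2 / (2 * cosh θ ^ 2 * cosh (timeMapHomeomorph.symm (timeMap θ * x)) ^ 4) := by
  have hs := hasDerivAt_timeMapHomeomorph_symm_mul θ x
  rw [deriv_stationarySolution]
  have := cosh_pos (timeMapHomeomorph.symm (timeMap θ * x))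
  refine ((((hs.sinh).const_mul (timeMap θ)).div
    ((hs.cosh).const_mul (cosh θ ^ 2)) (by positivity)).deriv).trans ?_
  set s := timeMapHomeomorph.symm (timeMap θ * x)
  field_simp
  linear_combination timeMap θ ^ 2 * cosh_sq_sub_sinh_sq s

lemma stationaryVoltage_pos {θ : ℝ} (hθ : θ ≠ 0) : 0 < stationaryVoltage θ := by
  have : timeMap θ ≠ 0 := by simpa [timeMap] using strictMono_timeMap.injective.ne hθ
  unfold stationaryVoltage; positivity

lemma isStationarySolution_stationarySolution :
    IsStationarySolution (stationaryVoltage θ) (stationarySolution θ) := by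
  have hθ := cosh_pos θ
  refine ⟨contDiff_stationarySolution θ |>.contDiffOn, ?_, ?_, fun x _ => ?_, fun x _ => ?_⟩
  · rw [stationarySolution, mul_neg_one, ← timeMap_neg, timeMapHomeomorph_symm_timeMap, cosh_neg,
      div_self (by positivity), sub_self]
  · rw [stationarySolution, mul_one, timeMapHomeomorph_symm_timeMap, div_self (by positivity),
      sub_self]
  · unfold stationarySolution
    have := cosh_pos (timeMapHomeomorph.symm (timeMap θ * x))
    have : 0 < cosh (timeMapHomeomorph.symm (timeMap θ * x)) ^ 2 / cosh θ ^ 2 := by positivity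
    linarith
  · rw [deriv_deriv_stationarySolution, stationaryVoltage, stationarySolution, add_sub_cancel]
    have := cosh_pos (timeMapHomeomorph.symm (timeMap θ * x))
    field_simp

end Family

lemma IsStationarySolution.lt_two {lam : ℝ} {u : ℝ → ℝ} (h : IsStationarySolution lam u)
    (hlam : 0 ≤ lam) : lam < 2 := by
  obtain ⟨hu, hu_left, hu_right, hgt, hode⟩ := h
  have hu' : ∀ x ∈ Ioo (-1 : ℝ) 1, HasDerivAt u (deriv u x) x := fun x hx =>
    ((hu.differentiableOn two_ne_zero).differentiableAt (Icc_mem_nhds hx.1 hx.2)).hasDerivAt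
  have hu'' : ∀ x ∈ Ioo (-1 : ℝ) 1, HasDerivAt (deriv u) (deriv (deriv u) x) x := fun x hx =>
    ContDiffOn.hasDerivAt_deriv_deriv (hu.mono Ioo_subset_Icc_self) isOpen_Ioo hx
  have hu_nonpos : ∀ x ∈ Icc (-1 : ℝ) 1, u x ≤ 0 := fun x hx =>
    nonpos_of_hasDerivAt2_nonneg hu.continuousOn hu' hu''
      (fun y hy => by rw [hode y hy]; positivity) hu_left.le hu_right.le hx
  have hcompare : u 0 - lam / 2 * (0 ^ 2 - 1) ≤ 0 := by
    refine nonpos_of_hasDerivAt2_nonneg (a := -1) (b := 1)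
      (f := fun x => u x - lam / 2 * (x ^ 2 - 1))
      (f' := fun x => deriv u x - lam * x) (f'' := fun x => deriv (deriv u) x - lam)
      (hu.continuousOn.sub (by fun_prop)) (fun x hx => ?_) (fun x hx => ?_) (fun x hx => ?_)
      (by simp [hu_left]) (by simp [hu_right]) (by norm_num)
    · exact (hu' x hx).sub
        ((((hasDerivAt_pow 2 x).sub_const 1).const_mul (lam / 2)).congr_deriv (by ring))
    · exact ((hu'' x hx).sub ((hasDerivAt_id' x).const_mul lam)).congr_deriv (by rw [mul_one])
    · have hx' := Ioo_subset_Icc_self hx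
      have h1u : 0 < 1 + u x := by linarith [hgt x hx']
      have : lam ≤ lam / (1 + u x) ^ 2 :=
        le_div_self hlam (by positivity) (pow_le_one₀ h1u.le (by linarith [hu_nonpos x hx']))
      rw [hode x hx]; linarith
  linarith [hgt 0 (by norm_num)]

end PullIn

end

open PullIn

/-- The set of voltages admitting a stationary solution is nonempty and bounded
above, and the static pull-in value `λ* = sup Λ` is finite and positive. -/
theorem pull_in_value_exists :
    let Λ : Set ℝ := {lam | 0 < lam ∧ ∃ u : ℝ → ℝ,
      ContDiffOn ℝ 2 u (Set.Icc (-1 : ℝ) 1) ∧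
      u (-1) = 0 ∧ u 1 = 0 ∧
      (∀ x ∈ Set.Icc (-1 : ℝ) 1, -1 < u x) ∧
      (∀ x ∈ Set.Ioo (-1 : ℝ) 1, deriv (deriv u) x = lam / (1 + u x) ^ 2)}
    Λ.Nonempty ∧ BddAbove Λ ∧ 0 < sSup Λ := by
  intro Λ
  have hmem : stationaryVoltage 1 ∈ Λ :=
    ⟨stationaryVoltage_pos one_ne_zero, _, isStationarySolution_stationarySolution 1⟩
  have hbdd : BddAbove Λ :=
    ⟨2, fun lam ⟨hlam, _, hu⟩ => (IsStationarySolution.lt_two hu hlam.le).le⟩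
  exact ⟨⟨_, hmem⟩, hbdd, (stationaryVoltage_pos one_ne_zero).trans_le (le_csSup hbdd hmem)⟩
end

section
/- If λ ∈ Λ (i.e., the stationary MEMS problem u'' = λ/(1+u)², u(±1)=0, u > -1 has a solution u_λ), then every μ with 0 < μ < λ also belongs to Λ: u_λ is a subsolution and 0 is a supersolution for the problem with parameter μ, so a solution exists for μ. Consequently Λ is an interval. -/
/-!
Let `m > -1` be the minimum of `u_λ` and `F t = μ / (1 + max t m)²`, a bounded, continuous and
antitone truncation of the nonlinearity. A function with nonnegative second derivative is convex,
so it is bounded by its boundary values; hence the solution operator `S` of `u'' = g`,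
`u (±1) = 0`, reverses order, and the iteration `q₀ = 0`, `qₙ₊₁ = S (F ∘ qₙ)` decreases while
staying above the subsolution `u_λ` (here `μ < λ` enters). By dominated convergence its limit is
a fixed point of `S ∘ F`, i.e. a solution with parameter `μ`, and it lies above `u_λ ≥ m`, where
`F` agrees with `μ / (1 + t)²`.
-/

open Set Filter Topology MeasureTheory intervalIntegral

theorem ContDiffAt.deriv_deriv_sub {f h : ℝ → ℝ} {x : ℝ} (hf : ContDiffAt ℝ 2 f x)
    (hh : ContDiffAt ℝ 2 h x) :
    deriv (deriv (f - h)) x = deriv (deriv f) x - deriv (deriv h) x := by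
  have hfirst : deriv (f - h) =ᶠ[𝓝 x] deriv f - deriv h := by
    filter_upwards [hf.eventually (by simp), hh.eventually (by simp)] with y hfy hhy
    exact deriv_sub (hfy.differentiableAt (by simp)) (hhy.differentiableAt (by simp))
  rw [hfirst.deriv_eq]
  exact deriv_sub ((hf.derivWithin (m := 1) le_rfl).differentiableAt (by simp))
    ((hh.derivWithin (m := 1) le_rfl).differentiableAt (by simp))

theorem le_of_deriv_deriv_le {a b : ℝ} {u w : ℝ → ℝ} (hu : ContDiffOn ℝ 2 u (Icc a b))
    (hw : ContDiffOn ℝ 2 w (Icc a b)) (h : ∀ x ∈ Ioo a b, deriv (deriv w) x ≤ deriv (deriv u) x)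
    (ha : u a ≤ w a) (hb : u b ≤ w b) {x : ℝ} (hx : x ∈ Icc a b) : u x ≤ w x := by
  have hφ : ContDiffOn ℝ 2 (u - w) (Icc a b) := hu.sub hw
  have hφ' : ContDiffOn ℝ 2 (u - w) (Ioo a b) := hφ.mono Ioo_subset_Icc_self
  have hconv : ConvexOn ℝ (Icc a b) (u - w) := by
    refine convexOn_of_deriv2_nonneg (convex_Icc a b) hφ.continuousOn ?_ ?_ ?_ <;>
      rw [interior_Icc]
    · exact hφ'.differentiableOn (by simp)
    · exact (hφ'.deriv_of_isOpen (m := 1) isOpen_Ioo le_rfl).differentiableOn (by simp)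
    · intro y hy
      rw [Function.iterate_succ_apply, Function.iterate_one,
        (hu.contDiffAt (Icc_mem_nhds hy.1 hy.2)).deriv_deriv_sub
          (hw.contDiffAt (Icc_mem_nhds hy.1 hy.2))]
      exact sub_nonneg.2 (h y hy)
  have hmax := hconv.le_max_of_mem_Icc (left_mem_Icc.2 (hx.1.trans hx.2))
    (right_mem_Icc.2 (hx.1.trans hx.2)) hx
  simp only [Pi.sub_apply] at hmax
  linarith [max_le (sub_nonpos.2 ha) (sub_nonpos.2 hb)]

theorem tendsto_intervalIntegral_of_abs_le {f : ℕ → ℝ → ℝ} {f₀ : ℝ → ℝ} {a b C : ℝ}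
    (hf : ∀ n, Continuous (f n)) (hC : ∀ n, ∀ y ∈ uIcc a b, |f n y| ≤ C)
    (hlim : ∀ y ∈ uIcc a b, Tendsto (fun n => f n y) atTop (𝓝 (f₀ y))) :
    Tendsto (fun n => ∫ y in a..b, f n y) atTop (𝓝 (∫ y in a..b, f₀ y)) :=
  tendsto_integral_filter_of_dominated_convergence (fun _ => C)
    (Eventually.of_forall fun n => (hf n).aestronglyMeasurable)
    (Eventually.of_forall fun n => ae_of_all _ fun y hy => hC n y (uIoc_subset_uIcc hy))
    intervalIntegrable_const (ae_of_all _ fun y hy => hlim y (uIoc_subset_uIcc hy))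

namespace DirichletProblem

noncomputable def doublePrimitive (g : ℝ → ℝ) (x : ℝ) : ℝ :=
  ∫ t in (-1)..x, ∫ y in (-1)..t, g y

noncomputable def dirichletSolve (g : ℝ → ℝ) (x : ℝ) : ℝ :=
  doublePrimitive g x - (x + 1) / 2 * doublePrimitive g 1

@[simp]
theorem dirichletSolve_neg_one (g : ℝ → ℝ) : dirichletSolve g (-1) = 0 := by
  simp [dirichletSolve, doublePrimitive]

@[simp]
theorem dirichletSolve_one (g : ℝ → ℝ) : dirichletSolve g 1 = 0 := by
  rw [dirichletSolve]; ring

section Solve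

variable {g : ℝ → ℝ}

theorem hasDerivAt_dirichletSolve (hg : ∀ a b, IntervalIntegrable g volume a b) (x : ℝ) :
    HasDerivAt (dirichletSolve g) ((∫ y in (-1)..x, g y) - doublePrimitive g 1 / 2) x :=
  (((continuous_primitive hg (-1)).integral_hasStrictDerivAt (-1) x).hasDerivAt.sub
    ((((hasDerivAt_id x).add_const 1).div_const 2).mul_const _)).congr_deriv (by ring)

theorem continuous_dirichletSolve (hg : ∀ a b, IntervalIntegrable g volume a b) :
    Continuous (dirichletSolve g) :=
  continuous_iff_continuousAt.2 fun x => (hasDerivAt_dirichletSolve hg x).continuousAt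

theorem hasDerivAt_deriv_dirichletSolve (hg : Continuous g) (x : ℝ) :
    HasDerivAt (deriv (dirichletSolve g)) (g x) x := by
  rw [funext fun y => (hasDerivAt_dirichletSolve hg.intervalIntegrable y).deriv]
  exact (hg.integral_hasStrictDerivAt (-1) x).hasDerivAt.sub_const _

theorem deriv_deriv_dirichletSolve (hg : Continuous g) (x : ℝ) :
    deriv (deriv (dirichletSolve g)) x = g x :=
  (hasDerivAt_deriv_dirichletSolve hg x).deriv

theorem contDiff_dirichletSolve (hg : Continuous g) : ContDiff ℝ 2 (dirichletSolve g) := by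
  rw [show (2 : WithTop ℕ∞) = 1 + 1 from rfl, contDiff_succ_iff_deriv]
  refine ⟨fun x => (hasDerivAt_dirichletSolve hg.intervalIntegrable x).differentiableAt,
    by simp, contDiff_one_iff_deriv.2
      ⟨fun x => (hasDerivAt_deriv_dirichletSolve hg x).differentiableAt, ?_⟩⟩
  rw [show deriv (deriv (dirichletSolve g)) = g from funext (deriv_deriv_dirichletSolve hg)]
  exact hg

end Solve

section Convergence

variable {g : ℕ → ℝ → ℝ} {g₀ : ℝ → ℝ} {C : ℝ}

theorem tendsto_doublePrimitive (hg : ∀ n, Continuous (g n))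
    (hC : ∀ n, ∀ y ∈ Icc (-1 : ℝ) 1, |g n y| ≤ C)
    (hlim : ∀ y ∈ Icc (-1 : ℝ) 1, Tendsto (fun n => g n y) atTop (𝓝 (g₀ y)))
    {x : ℝ} (hx : x ∈ Icc (-1 : ℝ) 1) :
    Tendsto (fun n => doublePrimitive (g n) x) atTop (𝓝 (doublePrimitive g₀ x)) := by
  have hsub : ∀ {t}, t ∈ Icc (-1 : ℝ) 1 → uIcc (-1) t ⊆ Icc (-1 : ℝ) 1 :=
    uIcc_subset_Icc (left_mem_Icc.2 (by norm_num))
  have hC₀ : 0 ≤ C := (abs_nonneg _).trans (hC 0 1 (right_mem_Icc.2 (by norm_num)))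
  refine tendsto_intervalIntegral_of_abs_le (C := C * 2)
    (fun n => continuous_primitive (hg n).intervalIntegrable (-1)) (fun n t ht => ?_)
    fun t ht => tendsto_intervalIntegral_of_abs_le hg
      (fun n y hy => hC n y (hsub (hsub hx ht) hy)) fun y hy => hlim y (hsub (hsub hx ht) hy)
  have ht' := hsub hx ht
  calc |∫ y in (-1)..t, g n y| ≤ C * |t - -1| :=
        norm_integral_le_of_norm_le_const (f := g n) fun y hy =>
          hC n y (hsub ht' (uIoc_subset_uIcc hy))
    _ ≤ C * 2 := by
        gcongr
        rw [abs_le]; constructor <;> linarith [ht'.1, ht'.2]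

theorem tendsto_dirichletSolve (hg : ∀ n, Continuous (g n))
    (hC : ∀ n, ∀ y ∈ Icc (-1 : ℝ) 1, |g n y| ≤ C)
    (hlim : ∀ y ∈ Icc (-1 : ℝ) 1, Tendsto (fun n => g n y) atTop (𝓝 (g₀ y)))
    {x : ℝ} (hx : x ∈ Icc (-1 : ℝ) 1) :
    Tendsto (fun n => dirichletSolve (g n) x) atTop (𝓝 (dirichletSolve g₀ x)) :=
  (tendsto_doublePrimitive hg hC hlim hx).sub
    ((tendsto_doublePrimitive hg hC hlim (right_mem_Icc.2 (by norm_num))).const_mul _)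

end Convergence

noncomputable def dirichletIter (F w : ℝ → ℝ) (n : ℕ) : ℝ → ℝ :=
  (fun q => dirichletSolve (F ∘ q))^[n] w

section SubSuper

variable {F v w : ℝ → ℝ} {C : ℝ}

theorem dirichletIter_succ (n : ℕ) :
    dirichletIter F w (n + 1) = dirichletSolve (F ∘ dirichletIter F w n) :=
  Function.iterate_succ_apply' _ _ _

theorem contDiff_dirichletIter (hF : Continuous F) (hw : ContDiff ℝ 2 w) (n : ℕ) :
    ContDiff ℝ 2 (dirichletIter F w n) := by
  induction n with
  | zero => exact hw
  | succ n ih => rw [dirichletIter_succ]; exact contDiff_dirichletSolve (hF.comp ih.continuous)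

theorem deriv_deriv_dirichletIter_succ (hF : Continuous F) (hw : ContDiff ℝ 2 w) (n : ℕ)
    (x : ℝ) : deriv (deriv (dirichletIter F w (n + 1))) x = F (dirichletIter F w n x) := by
  rw [dirichletIter_succ]
  exact deriv_deriv_dirichletSolve (hF.comp (contDiff_dirichletIter hF hw n).continuous) x

theorem le_dirichletIter (hF : Continuous F) (hFa : Antitone F)
    (hv : ContDiffOn ℝ 2 v (Icc (-1) 1)) (hw : ContDiff ℝ 2 w)
    (hvF : ∀ x ∈ Ioo (-1 : ℝ) 1, F (v x) ≤ deriv (deriv v) x)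
    (hv_left : v (-1) ≤ 0) (hv_right : v 1 ≤ 0) (hvw : ∀ x ∈ Icc (-1 : ℝ) 1, v x ≤ w x) :
    ∀ n, ∀ x ∈ Icc (-1 : ℝ) 1, v x ≤ dirichletIter F w n x := by
  intro n
  induction n with
  | zero => exact hvw
  | succ n ih =>
    refine fun x hx => le_of_deriv_deriv_le hv (contDiff_dirichletIter hF hw _).contDiffOn
      (fun y hy => ?_) (by simpa [dirichletIter_succ] using hv_left)
      (by simpa [dirichletIter_succ] using hv_right) hx
    rw [deriv_deriv_dirichletIter_succ hF hw]
    exact (hFa (ih y (Ioo_subset_Icc_self hy))).trans (hvF y hy)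

theorem dirichletIter_succ_le (hF : Continuous F) (hFa : Antitone F) (hw : ContDiff ℝ 2 w)
    (hwF : ∀ x ∈ Ioo (-1 : ℝ) 1, deriv (deriv w) x ≤ F (w x))
    (hw_left : 0 ≤ w (-1)) (hw_right : 0 ≤ w 1) :
    ∀ n, ∀ x ∈ Icc (-1 : ℝ) 1, dirichletIter F w (n + 1) x ≤ dirichletIter F w n x := by
  have hsmooth n := (contDiff_dirichletIter hF hw n).contDiffOn (s := Icc (-1 : ℝ) 1)
  intro n
  induction n with
  | zero =>
    refine fun x hx => le_of_deriv_deriv_le (hsmooth 1) hw.contDiffOn (fun y hy => ?_)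
      (by simpa [dirichletIter_succ] using hw_left)
      (by simpa [dirichletIter_succ] using hw_right) hx
    rw [deriv_deriv_dirichletIter_succ hF hw]
    exact hwF y hy
  | succ n ih =>
    refine fun x hx => le_of_deriv_deriv_le (hsmooth (n + 2)) (hsmooth (n + 1))
      (fun y hy => ?_) (by simp [dirichletIter_succ]) (by simp [dirichletIter_succ]) hx
    rw [deriv_deriv_dirichletIter_succ hF hw, deriv_deriv_dirichletIter_succ hF hw]
    exact hFa (ih y (Ioo_subset_Icc_self hy))

variable (hF : Continuous F) (hFa : Antitone F) (hFC : ∀ t, |F t| ≤ C)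
  (hv : ContDiffOn ℝ 2 v (Icc (-1) 1)) (hw : ContDiff ℝ 2 w)
  (hvF : ∀ x ∈ Ioo (-1 : ℝ) 1, F (v x) ≤ deriv (deriv v) x)
  (hwF : ∀ x ∈ Ioo (-1 : ℝ) 1, deriv (deriv w) x ≤ F (w x))
  (hv_left : v (-1) ≤ 0) (hv_right : v 1 ≤ 0) (hw_left : 0 ≤ w (-1)) (hw_right : 0 ≤ w 1)
  (hvw : ∀ x ∈ Icc (-1 : ℝ) 1, v x ≤ w x)
include hF hFa hFC hv hw hvF hwF hv_left hv_right hw_left hw_right hvw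

theorem exists_fixedPoint_dirichletSolve_comp_between :
    ∃ V : ℝ → ℝ, Continuous V ∧ (∀ x ∈ Icc (-1 : ℝ) 1, v x ≤ V x ∧ V x ≤ w x) ∧
      ∀ x ∈ Icc (-1 : ℝ) 1, V x = dirichletSolve (F ∘ V) x := by
  set q := dirichletIter F w
  have hq n : Continuous (q n) := (contDiff_dirichletIter hF hw n).continuous
  have hvq := le_dirichletIter hF hFa hv hw hvF hv_left hv_right hvw
  have hq_anti := dirichletIter_succ_le hF hFa hw hwF hw_left hw_right
  set clamp : ℝ → ℝ := fun x => projIcc (-1) 1 (by norm_num) x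
  have hclamp : Continuous clamp := continuous_subtype_val.comp continuous_projIcc
  have hclamp_eq : ∀ x ∈ Icc (-1 : ℝ) 1, clamp x = x := fun x hx => by
    simp [clamp, projIcc_of_mem _ hx]
  -- extended by constants off `[-1, 1]`, so that `V` is continuous once it is so on `[-1, 1]`
  set V : ℝ → ℝ := fun x => ⨅ n, q n (clamp x)
  have hbdd : ∀ x ∈ Icc (-1 : ℝ) 1, BddBelow (range fun n => q n x) :=
    fun x hx => ⟨v x, forall_mem_range.2 fun n => hvq n x hx⟩
  have hlim : ∀ x ∈ Icc (-1 : ℝ) 1, Tendsto (fun n => q n x) atTop (𝓝 (V x)) := fun x hx => by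
    simp only [V, hclamp_eq x hx]
    exact tendsto_atTop_ciInf (antitone_nat_of_succ_le fun n => hq_anti n x hx) (hbdd x hx)
  have hFV : ∀ a b, IntervalIntegrable (F ∘ V) volume a b := fun a b =>
    intervalIntegrable_const.mono_fun'
      (hF.measurable.comp (Measurable.iInf fun n =>
        ((hq n).comp hclamp).measurable)).aestronglyMeasurable
      (ae_of_all _ fun y => hFC (V y))
  have hfix : ∀ x ∈ Icc (-1 : ℝ) 1, V x = dirichletSolve (F ∘ V) x := fun x hx =>
    tendsto_nhds_unique ((hlim x hx).comp (tendsto_add_atTop_nat 1)) <| by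
      simpa only [Function.comp_def, q, dirichletIter_succ] using
        tendsto_dirichletSolve (fun n => hF.comp (hq n)) (fun n y _ => hFC _)
          (fun y hy => (hF.tendsto _).comp (hlim y hy)) hx
  refine ⟨V, ?_, fun x hx => ⟨?_, ?_⟩, hfix⟩
  · have hV : V = dirichletSolve (F ∘ V) ∘ clamp := funext fun x => by
      rw [Function.comp_apply, ← hfix _ (projIcc _ _ _ x).2]
      simp [V, clamp]
    rw [hV]
    exact (continuous_dirichletSolve hFV).comp hclamp
  · simp only [V, hclamp_eq x hx]
    exact le_ciInf fun n => hvq n x hx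
  · simp only [V, hclamp_eq x hx]
    exact ciInf_le (hbdd x hx) 0

theorem exists_solution_between_of_sub_super :
    ∃ u : ℝ → ℝ, ContDiff ℝ 2 u ∧ u (-1) = 0 ∧ u 1 = 0 ∧
      (∀ x ∈ Icc (-1 : ℝ) 1, v x ≤ u x ∧ u x ≤ w x) ∧
      ∀ x ∈ Icc (-1 : ℝ) 1, deriv (deriv u) x = F (u x) := by
  obtain ⟨V, hV, hvVw, hfix⟩ := exists_fixedPoint_dirichletSolve_comp_between hF hFa hFC hv hw
    hvF hwF hv_left hv_right hw_left hw_right hvw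
  refine ⟨dirichletSolve (F ∘ V), contDiff_dirichletSolve (hF.comp hV),
    dirichletSolve_neg_one _, dirichletSolve_one _, fun x hx => hfix x hx ▸ hvVw x hx,
    fun x hx => ?_⟩
  rw [deriv_deriv_dirichletSolve (hF.comp hV), ← hfix x hx, Function.comp_apply]

end SubSuper

end DirichletProblem

open DirichletProblem

noncomputable def truncatedMemsForce (μ m t : ℝ) : ℝ := μ / (1 + max t m) ^ 2

section TruncatedMemsForce

variable {μ m : ℝ}

theorem truncatedMemsForce_of_le {t : ℝ} (ht : m ≤ t) :
    truncatedMemsForce μ m t = μ / (1 + t) ^ 2 := by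
  rw [truncatedMemsForce, max_eq_left ht]

theorem truncatedMemsForce_nonneg (hμ : 0 ≤ μ) (t : ℝ) : 0 ≤ truncatedMemsForce μ m t :=
  div_nonneg hμ (sq_nonneg _)

theorem continuous_truncatedMemsForce (hm : -1 < m) : Continuous (truncatedMemsForce μ m) :=
  continuous_const.div ((continuous_const.add (continuous_id.max continuous_const)).pow 2)
    fun t => (pow_pos (by linarith [le_max_right t m]) 2).ne'

theorem antitone_truncatedMemsForce (hμ : 0 ≤ μ) (hm : -1 < m) :
    Antitone (truncatedMemsForce μ m) := fun s t hst => by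
  have hs : 0 < 1 + max s m := by linarith [le_max_right s m]
  exact div_le_div_of_nonneg_left hμ (pow_pos hs 2) (pow_le_pow_left₀ hs.le (by gcongr) 2)

theorem abs_truncatedMemsForce_le (hμ : 0 ≤ μ) (hm : -1 < m) (t : ℝ) :
    |truncatedMemsForce μ m t| ≤ μ / (1 + m) ^ 2 := by
  rw [abs_of_nonneg (truncatedMemsForce_nonneg hμ t), truncatedMemsForce]
  exact div_le_div_of_nonneg_left hμ (pow_pos (by linarith) 2)
    (pow_le_pow_left₀ (by linarith) (by gcongr; exact le_max_right t m) 2)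

end TruncatedMemsForce

def IsMemsSolution (lam : ℝ) (u : ℝ → ℝ) : Prop :=
  ContDiffOn ℝ 2 u (Icc (-1 : ℝ) 1) ∧ u (-1) = 0 ∧ u 1 = 0 ∧
    (∀ x ∈ Icc (-1 : ℝ) 1, -1 < u x) ∧
    ∀ x ∈ Ioo (-1 : ℝ) 1, deriv (deriv u) x = lam / (1 + u x) ^ 2

theorem IsMemsSolution.exists_of_le {lam μ : ℝ} {u₀ : ℝ → ℝ} (hu₀ : IsMemsSolution lam u₀)
    (hμ : 0 ≤ μ) (hμlam : μ ≤ lam) : ∃ u, IsMemsSolution μ u := by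
  obtain ⟨hu₀_smooth, hu₀_left, hu₀_right, hu₀_gt, hu₀_ode⟩ := hu₀
  obtain ⟨x₀, hx₀, hmin⟩ := isCompact_Icc.exists_isMinOn (nonempty_Icc.2 (by norm_num))
    hu₀_smooth.continuousOn
  have hm : -1 < u₀ x₀ := hu₀_gt x₀ hx₀
  have hsub : ∀ x ∈ Ioo (-1 : ℝ) 1,
      truncatedMemsForce μ (u₀ x₀) (u₀ x) ≤ deriv (deriv u₀) x := fun x hx => by
    rw [hu₀_ode x hx, truncatedMemsForce_of_le (hmin (Ioo_subset_Icc_self hx))]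
    gcongr
  have hsuper : ∀ x ∈ Ioo (-1 : ℝ) 1,
      deriv (deriv fun _ => (0 : ℝ)) x ≤ truncatedMemsForce μ (u₀ x₀) 0 := fun x _ => by
    simpa using truncatedMemsForce_nonneg hμ 0
  have hu₀_nonpos : ∀ x ∈ Icc (-1 : ℝ) 1, u₀ x ≤ 0 := fun x hx =>
    le_of_deriv_deriv_le (w := fun _ => 0) hu₀_smooth contDiffOn_const (fun y hy => by
        simpa [hu₀_ode y hy] using div_nonneg (hμ.trans hμlam) (sq_nonneg (1 + u₀ y)))
      hu₀_left.le hu₀_right.le hx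
  obtain ⟨u, hu, hu_left, hu_right, hu_between, hu_ode⟩ := exists_solution_between_of_sub_super
    (continuous_truncatedMemsForce hm) (antitone_truncatedMemsForce hμ hm)
    (abs_truncatedMemsForce_le hμ hm) hu₀_smooth contDiff_const hsub hsuper
    hu₀_left.le hu₀_right.le le_rfl le_rfl hu₀_nonpos
  have hu_ge : ∀ x ∈ Icc (-1 : ℝ) 1, u₀ x₀ ≤ u x :=
    fun x hx => (hmin hx).trans (hu_between x hx).1
  refine ⟨u, hu.contDiffOn, hu_left, hu_right, fun x hx => hm.trans_le (hu_ge x hx),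
    fun x hx => ?_⟩
  rw [hu_ode x (Ioo_subset_Icc_self hx),
    truncatedMemsForce_of_le (hu_ge x (Ioo_subset_Icc_self hx))]

/-- If the stationary MEMS problem is solvable for `λ`, it is solvable for every
`μ ∈ (0, λ)`; consequently the solvable set `Λ` is an interval. -/
theorem solvable_set_is_interval :
    let Λ : Set ℝ := {lam | 0 < lam ∧ ∃ u : ℝ → ℝ,
      ContDiffOn ℝ 2 u (Set.Icc (-1 : ℝ) 1) ∧
      u (-1) = 0 ∧ u 1 = 0 ∧
      (∀ x ∈ Set.Icc (-1 : ℝ) 1, -1 < u x) ∧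
      (∀ x ∈ Set.Ioo (-1 : ℝ) 1, deriv (deriv u) x = lam / (1 + u x) ^ 2)}
    (∀ lam ∈ Λ, ∀ μ : ℝ, 0 < μ → μ < lam → μ ∈ Λ) ∧ Λ.OrdConnected := by
  intro Λ
  have hdown : ∀ lam ∈ Λ, ∀ μ : ℝ, 0 < μ → μ < lam → μ ∈ Λ :=
    fun lam ⟨_, _, hu₀⟩ μ hμ hμlam =>
      ⟨hμ, IsMemsSolution.exists_of_le (lam := lam) hu₀ hμ.le hμlam.le⟩
  refine ⟨hdown, ⟨fun x hx y hy z hz => ?_⟩⟩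
  rcases hz.2.eq_or_lt with rfl | hzy
  · exact hy
  · exact hdown y hy z (hx.1.trans_le hz.1) hzy
end

section
/- Let u(x,t) solve the heat equation u_t - u_xx = -λ/(1+u)² on (-1,1) × (0,T) with u(±1,t) = 0 and u(x,0) = 0, where 0 < λ, and suppose there exists a stationary solution U with U'' = λ/(1+U)², U(±1) = 0, -1 < U ≤ 0. Then -1 < U(x) ≤ u(x,t) ≤ 0 for all (x,t) ∈ (-1,1) × (0,T); in particular u does not quench (never reaches -1) on any finite time interval. -/
/-!
Write `w = U - u`. Where `w > 0` we have `u < U ≤ 0`, and as long as `u` stays above some level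
`-1 + η` the nonlinearity `λ/(1+u)²` is Lipschitz there, so `w_t - w_xx ≤ K w`. The weak maximum
principle applied to `w e^{-Kt} - εt` then gives `U ≤ u`. The floor on `u` is justified by a
continuity argument: `U ≥ -1 + δ` on `[-1, 1]`, so a floor at `-1 + δ/2` holding up to time `s`
yields `u ≥ -1 + δ` at time `s`, and the first time `u` touches `-1 + δ/2` cannot exist.
The bound `u ≤ 0` is the maximum principle for `u` itself, whose right-hand side is nonpositive.
-/

open Set Filter Topology

lemma IsLocalMax.deriv_deriv_nonpos {f : ℝ → ℝ} {x : ℝ} (h : IsLocalMax f x)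
    (hc : ContinuousAt f x) : deriv (deriv f) x ≤ 0 := by
  by_contra! hpos
  -- The second derivative test makes `x` a local minimum too, so `f` is locally constant.
  have hmin := isLocalMin_of_deriv_deriv_pos hpos h.deriv_eq_zero hc
  have hconst : f =ᶠ[𝓝 x] fun _ => f x :=
    (hmin.and h).mono fun y hy => le_antisymm hy.2 hy.1
  have hderiv : deriv f =ᶠ[𝓝 x] fun _ => 0 := hconst.deriv.trans (by simp)
  simp [hderiv.deriv_eq] at hpos

lemma IsMaxOn.deriv_nonneg_of_Icc {g : ℝ → ℝ} {a t : ℝ} (h : IsMaxOn g (Icc a t) t)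
    (hat : a < t) : 0 ≤ deriv g t := by
  by_cases hg : DifferentiableAt ℝ g t
  · have hcone : a - t ∈ posTangentConeAt (Icc a t) t :=
      sub_mem_posTangentConeAt_of_segment_subset (by rw [segment_eq_uIcc, uIcc_of_ge hat.le])
    have := h.localize.hasFDerivWithinAt_nonpos
      hg.hasDerivAt.hasDerivWithinAt.hasFDerivWithinAt hcone
    simp only [ContinuousLinearMap.toSpanSingleton_apply, smul_eq_mul] at this
    nlinarith
  · simp [deriv_zero_of_not_differentiableAt hg]

/-- `u_t - u_xx`, with Mathlib's `deriv` (which is `0` where the derivative does not exist). -/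
noncomputable def heatOp (v : ℝ → ℝ → ℝ) (x t : ℝ) : ℝ :=
  deriv (v x ·) t - deriv (deriv (v · t)) x

theorem heat_weak_maximum_principle {a b σ : ℝ} {v : ℝ → ℝ → ℝ}
    (hv : ContinuousOn (Function.uncurry v) (Icc a b ×ˢ Icc 0 σ))
    (hsub : ∀ x ∈ Ioo a b, ∀ t ∈ Ioc 0 σ, 0 < v x t → heatOp v x t < 0)
    (hside : ∀ t ∈ Icc 0 σ, v a t ≤ 0 ∧ v b t ≤ 0)
    (hbot : ∀ x ∈ Icc a b, v x 0 ≤ 0) :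
    ∀ x ∈ Icc a b, ∀ t ∈ Icc 0 σ, v x t ≤ 0 := by
  by_contra! hpos
  obtain ⟨x₁, hx₁, t₁, ht₁, hv₁⟩ := hpos
  obtain ⟨⟨x₀, t₀⟩, ⟨hx₀, ht₀⟩, hmax⟩ :=
    (isCompact_Icc.prod isCompact_Icc).exists_isMaxOn ⟨(x₁, t₁), hx₁, ht₁⟩ hv
  have hmax' : ∀ x ∈ Icc a b, ∀ t ∈ Icc 0 σ, v x t ≤ v x₀ t₀ :=
    fun x hx t ht => hmax (mk_mem_prod hx ht)
  have hv₀ : 0 < v x₀ t₀ := hv₁.trans_le (hmax' x₁ hx₁ t₁ ht₁)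
  have hx₀' : x₀ ∈ Ioo a b := by
    refine ⟨hx₀.1.lt_of_ne ?_, hx₀.2.lt_of_ne ?_⟩ <;> rintro rfl
    exacts [(hside t₀ ht₀).1.not_gt hv₀, (hside t₀ ht₀).2.not_gt hv₀]
  have ht₀' : 0 < t₀ := ht₀.1.lt_of_ne (by rintro rfl; exact (hbot x₀ hx₀).not_gt hv₀)
  have htime : 0 ≤ deriv (v x₀ ·) t₀ :=
    IsMaxOn.deriv_nonneg_of_Icc (fun t ht => hmax' x₀ hx₀ t ⟨ht.1, ht.2.trans ht₀.2⟩) ht₀'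
  have hspace : deriv (deriv (v · t₀)) x₀ ≤ 0 := by
    have hcont : ContinuousOn (v · t₀) (Icc a b) :=
      hv.comp (Continuous.prodMk_left t₀).continuousOn fun x hx => ⟨hx, ht₀⟩
    refine IsLocalMax.deriv_deriv_nonpos ?_ (hcont.continuousAt (Icc_mem_nhds hx₀'.1 hx₀'.2))
    filter_upwards [Icc_mem_nhds hx₀'.1 hx₀'.2] with x hx using hmax' x hx t₀ ht₀
  have := hsub x₀ hx₀' t₀ ⟨ht₀', ht₀.2⟩ hv₀
  rw [heatOp] at this
  linarith

lemma heatOp_mul_exp_sub {w : ℝ → ℝ → ℝ} {x t : ℝ} (hw : DifferentiableAt ℝ (w x ·) t)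
    (K ε : ℝ) :
    heatOp (fun y s => w y s * Real.exp (-(K * s)) - ε * s) x t
      = (heatOp w x t - K * w x t) * Real.exp (-(K * t)) - ε := by
  have htime : HasDerivAt (fun s => w x s * Real.exp (-(K * s)) - ε * s)
      (deriv (w x ·) t * Real.exp (-(K * t)) + w x t * (Real.exp (-(K * t)) * -K) - ε) t := by
    have hexp := (((hasDerivAt_id t).const_mul K).neg).exp
    have hlin := (hasDerivAt_id t).const_mul ε
    simp only [id, mul_one] at hexp hlin
    exact (hw.hasDerivAt.mul hexp).sub hlin
  have hspace : deriv (fun y => w y t * Real.exp (-(K * t)) - ε * t)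
      = fun y => deriv (w · t) y * Real.exp (-(K * t)) := by
    funext y
    rw [deriv_sub_const, deriv_mul_const_field]
  simp only [heatOp, htime.deriv, hspace, deriv_mul_const_field]
  ring

theorem nonpos_of_heatOp_le_mul {a b σ K : ℝ} {w : ℝ → ℝ → ℝ}
    (hw : ContinuousOn (Function.uncurry w) (Icc a b ×ˢ Icc 0 σ))
    (hwt : ∀ x ∈ Ioo a b, ∀ t ∈ Ioc 0 σ, DifferentiableAt ℝ (w x ·) t)
    (hsub : ∀ x ∈ Ioo a b, ∀ t ∈ Ioc 0 σ, 0 < w x t → heatOp w x t ≤ K * w x t)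
    (hside : ∀ t ∈ Icc 0 σ, w a t ≤ 0 ∧ w b t ≤ 0)
    (hbot : ∀ x ∈ Icc a b, w x 0 ≤ 0) :
    ∀ x ∈ Icc a b, ∀ t ∈ Icc 0 σ, w x t ≤ 0 := by
  intro x hx t ht
  -- The weight `e^{-Kt}` absorbs `K w`, and `-εt` makes the subsolution inequality strict.
  have hweighted : ∀ ε > 0, w x t * Real.exp (-(K * t)) ≤ ε * t := by
    intro ε hε
    suffices ∀ y ∈ Icc a b, ∀ s ∈ Icc 0 σ, w y s * Real.exp (-(K * s)) - ε * s ≤ 0 by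
      linarith [this x hx t ht]
    refine heat_weak_maximum_principle (hw.mul (by fun_prop) |>.sub (by fun_prop)) ?_ ?_ ?_
    · intro y hy s hs hpos
      have hws : 0 < w y s := pos_of_mul_pos_left (by nlinarith [hs.1]) (Real.exp_pos _).le
      rw [heatOp_mul_exp_sub (hwt y hy s hs)]
      nlinarith [hsub y hy s hs hws, Real.exp_pos (-(K * s))]
    · intro s hs
      have hexp := Real.exp_pos (-(K * s))
      constructor <;> nlinarith [hside s hs, hs.1]
    · intro y hy
      simpa using hbot y hy
  have hlim : Tendsto (fun ε : ℝ => ε * t) (𝓝[>] 0) (𝓝 0) := by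
    simpa using (tendsto_id.mul_const t).mono_left (nhdsWithin_le_nhds (a := (0 : ℝ)))
  have := ge_of_tendsto hlim (eventually_nhdsWithin_of_forall hweighted)
  exact nonpos_of_mul_nonpos_left this (Real.exp_pos _)

lemma div_one_add_sq_sub_div_le {lam η a b : ℝ} (hlam : 0 ≤ lam) (hη : 0 < η)
    (ha : -1 + η ≤ a) (hab : a ≤ b) (hb : b ≤ 0) :
    lam / (1 + a) ^ 2 - lam / (1 + b) ^ 2 ≤ 2 * lam / η ^ 4 * (b - a) := by
  have ha' : η ≤ 1 + a := by linarith
  have hb' : η ≤ 1 + b := by linarith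
  calc lam / (1 + a) ^ 2 - lam / (1 + b) ^ 2
      = lam * (b - a) * (2 + a + b) / ((1 + a) ^ 2 * (1 + b) ^ 2) := by
        have : 1 + a ≠ 0 := by linarith
        have : 1 + b ≠ 0 := by linarith
        field_simp
        ring
    _ ≤ lam * (b - a) * 2 / (η ^ 2 * η ^ 2) := by
        have : 0 ≤ lam * (b - a) := mul_nonneg hlam (by linarith)
        gcongr
        linarith
    _ = 2 * lam / η ^ 4 * (b - a) := by ring

lemma heatOp_stationary_sub {U : ℝ → ℝ} {u : ℝ → ℝ → ℝ} {x t : ℝ} (hU : ContDiffAt ℝ 2 U x)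
    (hux : ContDiffAt ℝ 2 (u · t) x) :
    heatOp (fun y s => U y - u y s) x t = -deriv (deriv U) x - heatOp u x t := by
  have hspace : deriv (deriv fun y => U y - u y t) x
      = deriv (deriv U) x - deriv (deriv (u · t)) x := by
    simpa [iteratedDeriv_succ] using iteratedDeriv_fun_sub hU hux
  simp only [heatOp, deriv_const_sub, hspace]
  ring

theorem forall_lt_of_bootstrap {X : Type*} [TopologicalSpace X] {K : Set X} (hK : IsCompact K)
    {g : X → ℝ → ℝ} {c σ : ℝ} (hg : ContinuousOn (Function.uncurry g) (K ×ˢ Icc 0 σ))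
    (h0 : ∀ x ∈ K, c < g x 0)
    (hstep : ∀ s ∈ Ioc 0 σ, (∀ x ∈ K, ∀ r ∈ Icc 0 s, c ≤ g x r) → ∀ x ∈ K, c < g x s) :
    ∀ x ∈ K, ∀ s ∈ Icc 0 σ, c < g x s := by
  by_contra! hbad
  obtain ⟨x₁, hx₁, s₁, hs₁, hle⟩ := hbad
  have hF : IsCompact ((K ×ˢ Icc 0 σ) ∩ Function.uncurry g ⁻¹' Iic c) :=
    hg.lowerSemicontinuousOn.isCompact_inter_preimage_Iic (hK.prod isCompact_Icc) c
  obtain ⟨⟨x₀, t₀⟩, ⟨⟨hx₀, ht₀⟩, hgt₀⟩, hfirst⟩ :=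
    hF.exists_isMinOn ⟨(x₁, s₁), ⟨hx₁, hs₁⟩, hle⟩ continuous_snd.continuousOn
  have hgt₀ : g x₀ t₀ ≤ c := hgt₀
  have hbefore : ∀ x ∈ K, ∀ r ∈ Ico 0 t₀, c < g x r := by
    intro x hx r hr
    by_contra! hr'
    exact hr.2.not_ge (isMinOn_iff.1 hfirst (x, r) ⟨⟨hx, hr.1, hr.2.le.trans ht₀.2⟩, hr'⟩)
  have ht₀pos : 0 < t₀ := ht₀.1.lt_of_ne (by rintro rfl; exact (h0 x₀ hx₀).not_ge hgt₀)
  have hupto : ∀ x ∈ K, ∀ r ∈ Icc 0 t₀, c ≤ g x r := by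
    intro x hx r hr
    have hcont : ContinuousOn (g x) (Icc 0 σ) :=
      hg.comp (Continuous.prodMk_right x).continuousOn fun r hr => ⟨hx, hr⟩
    have hsub : Ico 0 t₀ ⊆ Icc 0 σ := Ico_subset_Icc_self.trans (Icc_subset_Icc_right ht₀.2)
    exact ContinuousWithinAt.closure_le (by rwa [closure_Ico ht₀pos.ne]) continuousWithinAt_const
      ((hcont r ⟨hr.1, hr.2.trans ht₀.2⟩).mono hsub) fun r hr => (hbefore x hx r hr).le
  exact (hstep t₀ ⟨ht₀pos, ht₀.2⟩ hupto x₀ hx₀).not_ge hgt₀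

structure IsMEMSHeatSolution (lam a b σ : ℝ) (u : ℝ → ℝ → ℝ) : Prop where
  continuousOn : ContinuousOn (Function.uncurry u) (Icc a b ×ˢ Icc 0 σ)
  differentiableAt_time : ∀ x ∈ Ioo a b, ∀ t ∈ Ioc 0 σ, DifferentiableAt ℝ (u x ·) t
  contDiffAt_space : ∀ t ∈ Ioc 0 σ, ∀ x ∈ Ioo a b, ContDiffAt ℝ 2 (u · t) x
  heatOp_eq : ∀ x ∈ Ioo a b, ∀ t ∈ Ioc 0 σ, heatOp u x t = -lam / (1 + u x t) ^ 2
  boundary : ∀ t ∈ Icc 0 σ, u a t = 0 ∧ u b t = 0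
  initial : ∀ x ∈ Icc a b, u x 0 = 0

namespace IsMEMSHeatSolution

variable {lam a b σ : ℝ} {u : ℝ → ℝ → ℝ}

lemma mono (hu : IsMEMSHeatSolution lam a b σ u) {s : ℝ} (hs : s ≤ σ) :
    IsMEMSHeatSolution lam a b s u where
  continuousOn := hu.continuousOn.mono (prod_mono_right (Icc_subset_Icc_right hs))
  differentiableAt_time x hx t ht := hu.differentiableAt_time x hx t ⟨ht.1, ht.2.trans hs⟩
  contDiffAt_space t ht := hu.contDiffAt_space t ⟨ht.1, ht.2.trans hs⟩
  heatOp_eq x hx t ht := hu.heatOp_eq x hx t ⟨ht.1, ht.2.trans hs⟩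
  boundary t ht := hu.boundary t ⟨ht.1, ht.2.trans hs⟩
  initial := hu.initial

lemma nonpos (hu : IsMEMSHeatSolution lam a b σ u) (hlam : 0 ≤ lam) :
    ∀ x ∈ Icc a b, ∀ t ∈ Icc 0 σ, u x t ≤ 0 := by
  refine nonpos_of_heatOp_le_mul (K := 0) hu.continuousOn hu.differentiableAt_time ?_
    (fun t ht => (hu.boundary t ht).imp le_of_eq le_of_eq) (fun x hx => (hu.initial x hx).le)
  intro x hx t ht _
  rw [hu.heatOp_eq x hx t ht, zero_mul, neg_div]
  exact neg_nonpos.2 (by positivity)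

lemma stationary_le {U : ℝ → ℝ} {η : ℝ} (hu : IsMEMSHeatSolution lam a b σ u) (hlam : 0 ≤ lam)
    (hη : 0 < η) (hfloor : ∀ x ∈ Icc a b, ∀ t ∈ Icc 0 σ, -1 + η ≤ u x t)
    (hU_cont : ContinuousOn U (Icc a b)) (hU_smooth : ∀ x ∈ Ioo a b, ContDiffAt ℝ 2 U x)
    (hU_bc : U a = 0 ∧ U b = 0) (hU_nonpos : ∀ x ∈ Icc a b, U x ≤ 0)
    (hU_ode : ∀ x ∈ Ioo a b, deriv (deriv U) x = lam / (1 + U x) ^ 2) :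
    ∀ x ∈ Icc a b, ∀ t ∈ Icc 0 σ, U x ≤ u x t := by
  have hw := nonpos_of_heatOp_le_mul (w := fun x t => U x - u x t) (K := 2 * lam / η ^ 4)
    ((hU_cont.comp continuousOn_fst fun p hp => hp.1).sub hu.continuousOn)
    (fun x hx t ht => (hu.differentiableAt_time x hx t ht).const_sub _) ?_
    (fun t ht => by simp [hU_bc, hu.boundary t ht])
    (fun x hx => by simp [hu.initial x hx, hU_nonpos x hx])
  · exact fun x hx t ht => sub_nonpos.1 (hw x hx t ht)
  intro x hx t ht hlt
  rw [heatOp_stationary_sub (hU_smooth x hx) (hu.contDiffAt_space t ht x hx), hU_ode x hx,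
    hu.heatOp_eq x hx t ht]
  have := div_one_add_sq_sub_div_le hlam hη (hfloor x (Ioo_subset_Icc_self hx) t ⟨ht.1.le, ht.2⟩)
    (by linarith) (hU_nonpos x (Ioo_subset_Icc_self hx))
  rw [neg_div]
  linarith

end IsMEMSHeatSolution

theorem heat_no_quenching_general (lam T : ℝ) (hl : 0 < lam)
    (u : ℝ → ℝ → ℝ) (U : ℝ → ℝ)
    (hu_cont : ContinuousOn (Function.uncurry u)
      (Set.Icc (-1 : ℝ) 1 ×ˢ Set.Icc (0 : ℝ) T))
    (hux : ∀ t ∈ Set.Ioo (0 : ℝ) T, ContDiffOn ℝ 2 (fun x => u x t) (Set.Ioo (-1 : ℝ) 1))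
    (hut : ∀ x ∈ Set.Ioo (-1 : ℝ) 1, DifferentiableOn ℝ (fun t => u x t) (Set.Ioo (0 : ℝ) T))
    (hpde : ∀ x ∈ Set.Ioo (-1 : ℝ) 1, ∀ t ∈ Set.Ioo (0 : ℝ) T,
      deriv (fun t' => u x t') t - deriv (deriv (fun x' => u x' t)) x
        = -lam / (1 + u x t) ^ 2)
    (hbc : ∀ t ∈ Set.Icc (0 : ℝ) T, u (-1) t = 0 ∧ u 1 t = 0)
    (hic : ∀ x ∈ Set.Icc (-1 : ℝ) 1, u x 0 = 0)
    (hU_smooth : ContDiffOn ℝ 2 U (Set.Icc (-1 : ℝ) 1))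
    (hU_bc : U (-1) = 0 ∧ U 1 = 0)
    (hU_range : ∀ x ∈ Set.Icc (-1 : ℝ) 1, -1 < U x ∧ U x ≤ 0)
    (hU_ode : ∀ x ∈ Set.Ioo (-1 : ℝ) 1, deriv (deriv U) x = lam / (1 + U x) ^ 2) :
    ∀ x ∈ Set.Ioo (-1 : ℝ) 1, ∀ t ∈ Set.Ioo (0 : ℝ) T,
      -1 < U x ∧ U x ≤ u x t ∧ u x t ≤ 0 := by
  intro x hx t ht
  have hsol : IsMEMSHeatSolution lam (-1) 1 t u :=
    have hT : Ioc 0 t ⊆ Ioo 0 T := fun s hs => ⟨hs.1, hs.2.trans_lt ht.2⟩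
    { continuousOn := hu_cont.mono (prod_mono_right (Icc_subset_Icc_right ht.2.le))
      differentiableAt_time := fun y hy s hs =>
        (hut y hy).differentiableAt (isOpen_Ioo.mem_nhds (hT hs))
      contDiffAt_space := fun s hs y hy => (hux s (hT hs)).contDiffAt (isOpen_Ioo.mem_nhds hy)
      heatOp_eq := fun y hy s hs => hpde y hy s (hT hs)
      boundary := fun s hs => hbc s ⟨hs.1, hs.2.trans ht.2.le⟩
      initial := hic }
  obtain ⟨δ, hδ, hUδ⟩ : ∃ δ > 0, ∀ y ∈ Icc (-1 : ℝ) 1, -1 + δ ≤ U y := by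
    obtain ⟨y₀, hy₀, hmin⟩ :=
      isCompact_Icc.exists_isMinOn (nonempty_Icc.2 (by norm_num)) hU_smooth.continuousOn
    exact ⟨1 + U y₀, by linarith [(hU_range y₀ hy₀).1],
      fun y hy => by linarith [isMinOn_iff.1 hmin y hy]⟩
  have hbarrier : ∀ s ∈ Icc 0 t, (∀ y ∈ Icc (-1 : ℝ) 1, ∀ r ∈ Icc 0 s, -1 + δ / 2 ≤ u y r) →
      ∀ y ∈ Icc (-1 : ℝ) 1, U y ≤ u y s := fun s hs hfloor y hy =>
    (hsol.mono hs.2).stationary_le hl.le (half_pos hδ) hfloor hU_smooth.continuousOn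
      (fun z hz => hU_smooth.contDiffAt (Icc_mem_nhds hz.1 hz.2)) hU_bc
      (fun z hz => (hU_range z hz).2) hU_ode y hy s (right_mem_Icc.2 hs.1)
  have hfloor := forall_lt_of_bootstrap (c := -1 + δ / 2) isCompact_Icc hsol.continuousOn
    (fun y hy => by linarith [hsol.initial y hy, hUδ y hy, (hU_range y hy).2])
    (fun s hs hupto y hy => by linarith [hbarrier s ⟨hs.1.le, hs.2⟩ hupto y hy, hUδ y hy])
  have hxI := Ioo_subset_Icc_self hx
  have htI : t ∈ Icc 0 t := right_mem_Icc.2 ht.1.le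
  exact ⟨(hU_range x hxI).1, hbarrier t htI (fun y hy r hr => (hfloor y hy r hr).le) x hxI,
    hsol.nonpos hl.le x hxI t htI⟩

/-- Parabolic comparison for the small-aspect-ratio MEMS heat equation: a
stationary solution `U` is a barrier from below, so the evolution starting from
rest stays between `U` and `0` and never quenches. -/
theorem heat_no_quenching (lam T : ℝ) (hl : 0 < lam) (hT : 0 < T)
    (u : ℝ → ℝ → ℝ) (U : ℝ → ℝ)
    (hu_cont : ContinuousOn (Function.uncurry u)
      (Set.Icc (-1 : ℝ) 1 ×ˢ Set.Icc (0 : ℝ) T))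
    (hux : ∀ t ∈ Set.Ioo (0 : ℝ) T, ContDiffOn ℝ 2 (fun x => u x t) (Set.Ioo (-1 : ℝ) 1))
    (hut : ∀ x ∈ Set.Ioo (-1 : ℝ) 1, DifferentiableOn ℝ (fun t => u x t) (Set.Ioo (0 : ℝ) T))
    (hpde : ∀ x ∈ Set.Ioo (-1 : ℝ) 1, ∀ t ∈ Set.Ioo (0 : ℝ) T,
      deriv (fun t' => u x t') t - deriv (deriv (fun x' => u x' t)) x
        = -lam / (1 + u x t) ^ 2)
    (hbc : ∀ t ∈ Set.Icc (0 : ℝ) T, u (-1) t = 0 ∧ u 1 t = 0)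
    (hic : ∀ x ∈ Set.Icc (-1 : ℝ) 1, u x 0 = 0)
    (hU_smooth : ContDiffOn ℝ 2 U (Set.Icc (-1 : ℝ) 1))
    (hU_bc : U (-1) = 0 ∧ U 1 = 0)
    (hU_range : ∀ x ∈ Set.Icc (-1 : ℝ) 1, -1 < U x ∧ U x ≤ 0)
    (hU_ode : ∀ x ∈ Set.Ioo (-1 : ℝ) 1, deriv (deriv U) x = lam / (1 + U x) ^ 2) :
    ∀ x ∈ Set.Ioo (-1 : ℝ) 1, ∀ t ∈ Set.Ioo (0 : ℝ) T,
      -1 < U x ∧ U x ≤ u x t ∧ u x t ≤ 0 :=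
  heat_no_quenching_general lam T hl u U hu_cont hux hut hpde hbc hic hU_smooth hU_bc hU_range
    hU_ode
end

section
/- Consider the undamped spring model m x'' + k x = λ/(d₀ - x)² with x(0)=0, x'(0)=0. If the solution remains in [0, d₀) and converges (x stays bounded away from d₀ and reaches a turning point x_max where x' = 0 with x_max < d₀), then x_max satisfies (k/2)x_max² = λ x_max/(d₀(d₀ - x_max)), i.e., energy conservation gives (k/2)x_max² - λ/(d₀ - x_max) = -λ/d₀. In particular, the dynamical pull-in condition (k/2)x² = λ(1/(d₀-x) - 1/d₀) has a solution x < d₀ only if λ ≤ k d₀³/8, so the dynamical pull-in value k d₀³/8 is strictly smaller than the static pull-in value 4 k d₀³/27. -/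
/-!
Along a solution of `m x'' = -V'(x)` the energy `(m/2)x'² + V(x)` is constant, here with
`V(x) = (k/2)x² - λ/(d₀-x)`. At `t = 0` and at the turning point `t₁` the kinetic term vanishes,
so `V(x(t₁)) = V(0) = -λ/d₀`. Since `1/(d₀-x) - 1/d₀ = x/(d₀(d₀-x))`, a solution `0 < y < d₀` of
the dynamical pull-in condition gives `λ = (k/2) y (d₀-y) d₀`, and `y(d₀-y) ≤ d₀²/4`.
-/

open Set

theorem energy_eq_of_forall_mul_deriv_deriv_eq {x V V' : ℝ → ℝ} {m a b : ℝ}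
    (hx : Differentiable ℝ x) (hx' : Differentiable ℝ (deriv x))
    (hV : ∀ t ∈ Icc a b, HasDerivAt V (V' (x t)) (x t))
    (hode : ∀ t ∈ Icc a b, m * deriv (deriv x) t = -V' (x t)) :
    ∀ t ∈ Icc a b, m / 2 * deriv x t ^ 2 + V (x t) = m / 2 * deriv x a ^ 2 + V (x a) := by
  have hE : ∀ t ∈ Icc a b, HasDerivAt (fun t => m / 2 * deriv x t ^ 2 + V (x t)) 0 t := by
    intro t ht
    have h := (((hx' t).hasDerivAt.pow 2).const_mul (m / 2)).add
      ((hV t ht).comp t (hx t).hasDerivAt)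
    refine h.congr_deriv ?_
    linear_combination deriv x t * hode t ht
  exact constant_of_has_deriv_right_zero
    (fun t ht => (hE t ht).continuousAt.continuousWithinAt)
    (fun t ht => (hE t (Ico_subset_Icc_self ht)).hasDerivWithinAt)

theorem hasDerivAt_mems_potential (k d₀ lam : ℝ) {y : ℝ} (hy : y ≠ d₀) :
    HasDerivAt (fun y => k / 2 * y ^ 2 - lam / (d₀ - y)) (k * y - lam / (d₀ - y) ^ 2) y := by
  have h := ((hasDerivAt_pow 2 y).const_mul (k / 2)).sub
    ((hasDerivAt_const y lam).div ((hasDerivAt_const y d₀).sub (hasDerivAt_id y))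
      (sub_ne_zero.2 hy.symm))
  refine h.congr_deriv ?_
  simp only [Pi.sub_apply, id]
  ring

theorem one_div_sub_sub_one_div {d₀ y : ℝ} (hd : d₀ ≠ 0) (hy : y ≠ d₀) :
    1 / (d₀ - y) - 1 / d₀ = y / (d₀ * (d₀ - y)) := by
  field_simp [sub_ne_zero.2 hy.symm]
  ring

theorem eq_of_mul_sq_eq_one_div_sub_sub_one_div {k d₀ lam y : ℝ} (hd : d₀ ≠ 0) (hy0 : y ≠ 0)
    (hy : y ≠ d₀) (h : k / 2 * y ^ 2 = lam * (1 / (d₀ - y) - 1 / d₀)) :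
    lam = k / 2 * y * (d₀ - y) * d₀ := by
  rw [one_div_sub_sub_one_div hd hy] at h
  field_simp [sub_ne_zero.2 hy.symm] at h
  linear_combination -h / 2

theorem mul_mul_sub_mul_le {k d₀ : ℝ} (hkd : 0 ≤ k * d₀) (y : ℝ) :
    k / 2 * y * (d₀ - y) * d₀ ≤ k * d₀ ^ 3 / 8 := by
  nlinarith [mul_nonneg hkd (sq_nonneg (y - d₀ / 2))]

theorem undamped_dynamical_pull_in_general (m k d₀ lam t₁ : ℝ)
    (hk : 0 < k) (hd : 0 < d₀) (ht₁ : 0 < t₁)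
    (x : ℝ → ℝ) (hx : ContDiff ℝ 2 x)
    (hic : x 0 = 0 ∧ deriv x 0 = 0)
    (hrange : ∀ t ∈ Set.Icc (0 : ℝ) t₁, 0 ≤ x t ∧ x t < d₀)
    (hode : ∀ t ∈ Set.Icc (0 : ℝ) t₁,
      m * deriv (deriv x) t + k * x t = lam / (d₀ - x t) ^ 2)
    (hturn : deriv x t₁ = 0) :
    (k / 2 * (x t₁) ^ 2 - lam / (d₀ - x t₁) = -lam / d₀) ∧
    (k / 2 * (x t₁) ^ 2 = lam * x t₁ / (d₀ * (d₀ - x t₁))) ∧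
    ((∃ y : ℝ, 0 < y ∧ y < d₀ ∧ k / 2 * y ^ 2 = lam * (1 / (d₀ - y) - 1 / d₀)) →
      lam ≤ k * d₀ ^ 3 / 8) ∧
    k * d₀ ^ 3 / 8 < 4 * k * d₀ ^ 3 / 27 := by
  obtain ⟨hx0, hv0⟩ := hic
  have ht₁mem : t₁ ∈ Icc 0 t₁ := ⟨ht₁.le, le_rfl⟩
  have hX : x t₁ ≠ d₀ := (hrange t₁ ht₁mem).2.ne
  have henergy := energy_eq_of_forall_mul_deriv_deriv_eq (m := m)
    (V' := fun y => k * y - lam / (d₀ - y) ^ 2)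
    (hx.differentiable (by norm_num)) hx.differentiable_deriv_two
    (fun t ht => hasDerivAt_mems_potential k d₀ lam (hrange t ht).2.ne)
    (fun t ht => by linarith [hode t ht]) t₁ ht₁mem
  simp only [hx0, hv0, hturn] at henergy
  have hV : k / 2 * (x t₁) ^ 2 - lam / (d₀ - x t₁) = -lam / d₀ := by
    linear_combination henergy
  refine ⟨hV, ?_, ?_, by nlinarith [mul_pos hk (pow_pos hd 3)]⟩
  · rw [mul_div_assoc, ← one_div_sub_sub_one_div hd.ne' hX]
    linear_combination hV
  · rintro ⟨y, hy0, hyd, hy⟩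
    rw [eq_of_mul_sq_eq_one_div_sub_sub_one_div hd.ne' hy0.ne' hyd.ne hy]
    exact mul_mul_sub_mul_le (mul_pos hk hd).le y

/-- Undamped lumped MEMS model starting from rest: at a turning point `x_max`
energy conservation gives `(k/2)x_max² - λ/(d₀-x_max) = -λ/d₀`, i.e.
`(k/2)x_max² = λ x_max/(d₀(d₀-x_max))`; the dynamical pull-in condition has a
solution `0 < x < d₀` only if `λ ≤ k d₀³/8`, which is strictly smaller than the
static pull-in value `4 k d₀³/27`. -/
theorem undamped_dynamical_pull_in (m k d₀ lam t₁ : ℝ)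
    (hm : 0 < m) (hk : 0 < k) (hd : 0 < d₀) (hl : 0 < lam) (ht₁ : 0 < t₁)
    (x : ℝ → ℝ) (hx : ContDiff ℝ 2 x)
    (hic : x 0 = 0 ∧ deriv x 0 = 0)
    (hrange : ∀ t ∈ Set.Icc (0 : ℝ) t₁, 0 ≤ x t ∧ x t < d₀)
    (hode : ∀ t ∈ Set.Icc (0 : ℝ) t₁,
      m * deriv (deriv x) t + k * x t = lam / (d₀ - x t) ^ 2)
    (hturn : deriv x t₁ = 0) :
    (k / 2 * (x t₁) ^ 2 - lam / (d₀ - x t₁) = -lam / d₀) ∧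
    (k / 2 * (x t₁) ^ 2 = lam * x t₁ / (d₀ * (d₀ - x t₁))) ∧
    ((∃ y : ℝ, 0 < y ∧ y < d₀ ∧ k / 2 * y ^ 2 = lam * (1 / (d₀ - y) - 1 / d₀)) →
      lam ≤ k * d₀ ^ 3 / 8) ∧
    k * d₀ ^ 3 / 8 < 4 * k * d₀ ^ 3 / 27 :=
  undamped_dynamical_pull_in_general m k d₀ lam t₁ hk hd ht₁ x hx hic hrange hode hturn
end

section
/- If u : [-1,1] → ℝ is C², u(±1) = 0, -1 < u ≤ 0, and u''(x) = λ (1 + ε² u'(x)²)/(1+u(x))² · g(x)² with λ > 0, ε ≥ 0, and g : (-1,1) → ℝ continuous with g(x)² ≥ c > 0, then λ c ≤ 2. In particular the set of λ for which such a solution exists is bounded above by 2/c. -/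
/-!
Since `(1 + u)² ≤ 1 ≤ 1 + ε² u'²` and `g² ≥ c`, the equation forces `u'' ≥ λ c`, so `u` is
`λ c`-strongly convex on `[-1, 1]`. Comparing `u` at the midpoint with the parabola through its
boundary values gives `-1 < u 0 ≤ -λ c / 2`.
-/

open Set

theorem ContDiffOn.differentiableOn_deriv_interior {𝕜 : Type*} [NontriviallyNormedField 𝕜]
    {F : Type*} [NormedAddCommGroup F] [NormedSpace 𝕜 F] {f : 𝕜 → F} {s : Set 𝕜}
    (hf : ContDiffOn 𝕜 2 f s) : DifferentiableOn 𝕜 (deriv f) (interior s) :=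
  ((hf.mono interior_subset).deriv_of_isOpen isOpen_interior (by norm_num)).differentiableOn
    one_ne_zero

theorem strongConvexOn_of_le_deriv2 {D : Set ℝ} (hD : Convex ℝ D) {f : ℝ → ℝ} {m : ℝ}
    (hf : ContinuousOn f D) (hf' : DifferentiableOn ℝ f (interior D))
    (hf'' : DifferentiableOn ℝ (deriv f) (interior D))
    (hm : ∀ x ∈ interior D, m ≤ deriv^[2] f x) : StrongConvexOn D m f := by
  set q : ℝ → ℝ := fun x ↦ m / 2 * ‖x‖ ^ 2
  have hq : ∀ x, HasDerivAt q (m * x) x := fun x ↦ by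
    simpa [q, Real.norm_eq_abs, sq_abs, mul_assoc] using
      ((hasDerivAt_pow 2 x).const_mul (m / 2)).congr_deriv (by ring)
  have hf_at : ∀ x ∈ interior D, HasDerivAt f (deriv f x) x := fun x hx ↦
    (hf' x hx).differentiableAt (isOpen_interior.mem_nhds hx) |>.hasDerivAt
  have hf'_at : ∀ x ∈ interior D, HasDerivAt (deriv f) (deriv^[2] f x) x := fun x hx ↦
    (hf'' x hx).differentiableAt (isOpen_interior.mem_nhds hx) |>.hasDerivAt
  have hderiv : EqOn (deriv (f - q)) (fun x ↦ deriv f x - m * x) (interior D) := fun x hx ↦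
    ((hf_at x hx).sub (hq x)).deriv
  have hderiv2 : ∀ x ∈ interior D, HasDerivAt (deriv (f - q)) (deriv^[2] f x - m) x :=
    fun x hx ↦ ((hf'_at x hx).sub (by simpa using (hasDerivAt_id x).const_mul m))
      |>.congr_of_eventuallyEq (Filter.eventually_of_mem (isOpen_interior.mem_nhds hx) hderiv)
  rw [strongConvexOn_iff_convex]
  refine convexOn_of_deriv2_nonneg (f := f - q) hD (hf.sub (by fun_prop))
    (fun x hx ↦ ((hf_at x hx).sub (hq x)).differentiableAt.differentiableWithinAt)
    (fun x hx ↦ (hderiv2 x hx).differentiableAt.differentiableWithinAt) fun x hx ↦ ?_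
  rw [Function.iterate_succ_apply, Function.iterate_one, (hderiv2 x hx).deriv]
  exact sub_nonneg.2 (hm x hx)

theorem mul_le_membrane_forcing {lam c ε p u g : ℝ} (hl : 0 ≤ lam) (hg : c ≤ g ^ 2)
    (hu : -1 < u) (hu' : u ≤ 0) : lam * c ≤ lam * (1 + ε ^ 2 * p ^ 2) / (1 + u) ^ 2 * g ^ 2 := by
  have hquot : 1 ≤ (1 + ε ^ 2 * p ^ 2) / (1 + u) ^ 2 := by
    rw [one_le_div (by nlinarith)]
    nlinarith [sq_nonneg (ε * p)]
  calc lam * c ≤ lam * g ^ 2 := mul_le_mul_of_nonneg_left hg hl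
    _ ≤ lam * g ^ 2 * ((1 + ε ^ 2 * p ^ 2) / (1 + u) ^ 2) :=
      le_mul_of_one_le_right (by positivity) hquot
    _ = lam * (1 + ε ^ 2 * p ^ 2) / (1 + u) ^ 2 * g ^ 2 := by ring

theorem generalized_lambda_bound_general (lam ε c : ℝ) (hl : 0 < lam)
    (hc : 0 < c) (u g : ℝ → ℝ)
    (hu_smooth : ContDiffOn ℝ 2 u (Set.Icc (-1 : ℝ) 1))
    (hbc : u (-1) = 0 ∧ u 1 = 0)
    (hu : ∀ x ∈ Set.Icc (-1 : ℝ) 1, -1 < u x ∧ u x ≤ 0)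
    (hg : ∀ x ∈ Set.Ioo (-1 : ℝ) 1, c ≤ (g x) ^ 2)
    (hode : ∀ x ∈ Set.Ioo (-1 : ℝ) 1,
      deriv (deriv u) x
        = lam * (1 + ε ^ 2 * (deriv u x) ^ 2) / (1 + u x) ^ 2 * (g x) ^ 2) :
    lam * c ≤ 2 ∧ lam ≤ 2 / c := by
  have hconv : StrongConvexOn (Icc (-1) 1) (lam * c) u := by
    refine strongConvexOn_of_le_deriv2 (convex_Icc _ _) hu_smooth.continuousOn
      ((hu_smooth.differentiableOn (by norm_num)).mono interior_subset)
      hu_smooth.differentiableOn_deriv_interior fun x hx ↦ ?_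
    rw [interior_Icc] at hx
    obtain ⟨hu_gt, hu_le⟩ := hu x (Ioo_subset_Icc_self hx)
    rw [Function.iterate_succ_apply, Function.iterate_one, hode x hx]
    exact mul_le_membrane_forcing hl.le (hg x hx) hu_gt hu_le
  have hmid : u 0 ≤ -(lam * c / 2) := by
    have := hconv.2 (by norm_num : (-1 : ℝ) ∈ Icc (-1) 1) (by norm_num : (1 : ℝ) ∈ Icc (-1) 1)
      (by norm_num : (0 : ℝ) ≤ 1 / 2) (by norm_num : (0 : ℝ) ≤ 1 / 2) (by norm_num)
    norm_num [hbc] at this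
    linarith
  have hlc : lam * c ≤ 2 := by linarith [(hu 0 (by norm_num)).1]
  exact ⟨hlc, (le_div_iff₀ hc).2 hlc⟩

/-- A priori bound for the generalized stationary membrane equation: if the
trace term satisfies `g(x)² ≥ c > 0`, then `λ c ≤ 2`; in particular the set of
admissible `λ` is bounded above by `2/c`. -/
theorem generalized_lambda_bound (lam ε c : ℝ) (hl : 0 < lam) (hε : 0 ≤ ε)
    (hc : 0 < c) (u g : ℝ → ℝ)
    (hu_smooth : ContDiffOn ℝ 2 u (Set.Icc (-1 : ℝ) 1))
    (hbc : u (-1) = 0 ∧ u 1 = 0)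
    (hu : ∀ x ∈ Set.Icc (-1 : ℝ) 1, -1 < u x ∧ u x ≤ 0)
    (hg_cont : ContinuousOn g (Set.Ioo (-1 : ℝ) 1))
    (hg : ∀ x ∈ Set.Ioo (-1 : ℝ) 1, c ≤ (g x) ^ 2)
    (hode : ∀ x ∈ Set.Ioo (-1 : ℝ) 1,
      deriv (deriv u) x
        = lam * (1 + ε ^ 2 * (deriv u x) ^ 2) / (1 + u x) ^ 2 * (g x) ^ 2) :
    lam * c ≤ 2 ∧ lam ≤ 2 / c :=
  generalized_lambda_bound_general lam ε c hl hc u g hu_smooth hbc hu hg hode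
end
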